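/- arXiv:2007.01659 — 5 statements merged into one kernel-verified Lean document; each statement's English description precedes it below -/
import Mathlib

section
/- Let (X,Y) be jointly distributed random variables with Y valued in the set e^K of K-dimensional one-hot vectors, let f be a measurable map from the input space to the probability simplex Δ^{K−1}, set Z = f(X), and let C = E[Y | Z] ∈ Δ^{K−1} be the calibration map. Then for any proper loss ℓ with divergence d(q,z) = ℓ(q,z) − ℓ(q,q), assuming all expectations exist, the expected loss decomposes as E[d(Y,Z)] = E[d(C,Z)] + E[d(Y,C)], and both terms on the right-hand side are nonnegative. -/
open MeasureTheory

/-!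
Since `ℓ(q, z)` is linear in `q` and both `Z` and `C` are `σ(Z)`-measurable, the tower property
gives `E[ℓ(Y, Z)] = E[ℓ(C, Z)]` and `E[ℓ(Y, C)] = E[ℓ(C, C)]`; subtracting `E[ℓ(Y, Y)]` yields the
decomposition. As `C` lies in the simplex almost surely, properness makes both divergences
pointwise nonnegative.
-/

/-- The one-hot vector `e_k ∈ ℝ^K`. -/
noncomputable def oneHot (K : ℕ) (k : Fin K) : Fin K → ℝ := Pi.single k 1

/-- Extension of a loss `ℓ : e^K × Δ^{K-1} → ℝ` to first arguments in the simplex,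
`ℓ(q, z) = ∑ k, q k * ℓ(e_k, z)`. -/
noncomputable def extLoss {K : ℕ} (ℓ : (Fin K → ℝ) → (Fin K → ℝ) → ℝ)
    (q z : Fin K → ℝ) : ℝ :=
  ∑ k, q k * ℓ (oneHot K k) z

/-- The divergence `d(q, z) = ℓ(q, z) - ℓ(q, q)` of a loss `ℓ`. -/
noncomputable def lossDiv {K : ℕ} (ℓ : (Fin K → ℝ) → (Fin K → ℝ) → ℝ)
    (q z : Fin K → ℝ) : ℝ :=
  extLoss ℓ q z - extLoss ℓ q q

lemma oneHot_apply {K : ℕ} (j k : Fin K) : oneHot K j k = if k = j then 1 else 0 := by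
  simp [oneHot, Pi.single_apply]

lemma oneHot_mem_stdSimplex {K : ℕ} (j : Fin K) : oneHot K j ∈ stdSimplex ℝ (Fin K) :=
  ⟨fun k => by rw [oneHot_apply]; split <;> norm_num, by simp [oneHot_apply]⟩

lemma mem_stdSimplex_of_exists_eq_oneHot {K : ℕ} {y : Fin K → ℝ} (h : ∃ k, y = oneHot K k) :
    y ∈ stdSimplex ℝ (Fin K) := by
  obtain ⟨k, rfl⟩ := h
  exact oneHot_mem_stdSimplex k

lemma extLoss_oneHot {K : ℕ} (ℓ : (Fin K → ℝ) → (Fin K → ℝ) → ℝ) (j : Fin K) (z : Fin K → ℝ) :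
    extLoss ℓ (oneHot K j) z = ℓ (oneHot K j) z := by
  simp [extLoss, oneHot_apply, ite_mul]

lemma norm_oneHot_mul_le_norm_extLoss {K : ℕ} (ℓ : (Fin K → ℝ) → (Fin K → ℝ) → ℝ)
    (j k : Fin K) (z : Fin K → ℝ) :
    ‖oneHot K j k * ℓ (oneHot K k) z‖ ≤ ‖extLoss ℓ (oneHot K j) z‖ := by
  rw [extLoss_oneHot, oneHot_apply]
  split_ifs with h
  · rw [h, one_mul]
  · simp

lemma lossDiv_nonneg {K : ℕ} {ℓ : (Fin K → ℝ) → (Fin K → ℝ) → ℝ}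
    (hproper : ∀ q ∈ stdSimplex ℝ (Fin K), ∀ z ∈ stdSimplex ℝ (Fin K),
      extLoss ℓ q q ≤ extLoss ℓ q z)
    {q z : Fin K → ℝ} (hq : q ∈ stdSimplex ℝ (Fin K)) (hz : z ∈ stdSimplex ℝ (Fin K)) :
    0 ≤ lossDiv ℓ q z :=
  sub_nonneg.2 (hproper q hq z hz)

section ConditionalExpectation

variable {Ω : Type*} {m m₀ : MeasurableSpace Ω} {μ : Measure Ω} {K : ℕ}

lemma integrable_apply_of_mem_stdSimplex [IsFiniteMeasure μ] {Y : Ω → Fin K → ℝ}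
    (hY : Measurable Y) (hYΔ : ∀ ω, Y ω ∈ stdSimplex ℝ (Fin K)) (k : Fin K) :
    Integrable (fun ω => Y ω k) μ := by
  refine (integrable_const (1 : ℝ)).mono ((measurable_pi_apply k).comp hY).aestronglyMeasurable
    (Filter.Eventually.of_forall fun ω => ?_)
  rw [norm_one, Real.norm_of_nonneg ((hYΔ ω).1 k)]
  exact stdSimplex.le_one ⟨Y ω, hYΔ ω⟩ k

lemma integral_condExp_mul (hm : m ≤ m₀) [SigmaFinite (μ.trim hm)] {f g : Ω → ℝ}
    (hg : StronglyMeasurable[m] g) (hfg : Integrable (fun ω => f ω * g ω) μ)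
    (hf : Integrable f μ) :
    Integrable (fun ω => μ[f | m] ω * g ω) μ ∧
      ∫ ω, μ[f | m] ω * g ω ∂μ = ∫ ω, f ω * g ω ∂μ := by
  have hpull := condExp_mul_of_stronglyMeasurable_right hg hfg hf
  exact ⟨integrable_condExp.congr hpull,
    (integral_congr_ae hpull.symm).trans (integral_condExp hm)⟩

lemma measurable_of_forall_eq_condExp {Y C : Ω → Fin K → ℝ}
    (hC : ∀ k, (fun ω => C ω k) = μ[fun ω => Y ω k | m]) : Measurable[m] C :=
  @measurable_pi_lambda Ω (Fin K) (fun _ => ℝ) m _ C fun k =>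
    (hC k ▸ stronglyMeasurable_condExp).measurable

lemma ae_mem_stdSimplex_condExp (hm : m ≤ m₀) [IsFiniteMeasure μ] {Y C : Ω → Fin K → ℝ}
    (hY : Measurable Y) (hYΔ : ∀ ω, Y ω ∈ stdSimplex ℝ (Fin K))
    (hC : ∀ k, (fun ω => C ω k) = μ[fun ω => Y ω k | m]) :
    ∀ᵐ ω ∂μ, C ω ∈ stdSimplex ℝ (Fin K) := by
  have hnonneg : ∀ᵐ ω ∂μ, ∀ k, 0 ≤ C ω k := by
    refine ae_all_iff.2 fun k => ?_
    have h := condExp_nonneg (μ := μ) (m := m) (Filter.Eventually.of_forall fun ω => (hYΔ ω).1 k)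
    rw [← hC k] at h
    exact h
  have hsum : ∀ᵐ ω ∂μ, ∑ k, C ω k = 1 := by
    have hYsum : (∑ k, fun ω => Y ω k) = fun _ => (1 : ℝ) := by
      funext ω
      simpa [Finset.sum_apply] using (hYΔ ω).2
    have hlin := condExp_finsetSum (μ := μ) (s := Finset.univ)
      (fun k _ => integrable_apply_of_mem_stdSimplex hY hYΔ k) m
    rw [hYsum, condExp_const hm, ← funext hC] at hlin
    filter_upwards [hlin] with ω hω
    simpa [Finset.sum_apply] using hω.symm
  filter_upwards [hnonneg, hsum] with ω h0 h1 using ⟨h0, h1⟩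

/-- `extLoss ℓ · z` is linear, so the tower property applies termwise; the one-hot hypothesis on `Y`
is what makes each term `Y k * ℓ (e_k, z)` integrable. -/
lemma integral_extLoss_condExp (hm : m ≤ m₀) [SigmaFinite (μ.trim hm)]
    [IsFiniteMeasure μ] (ℓ : (Fin K → ℝ) → (Fin K → ℝ) → ℝ)
    (hℓ : ∀ k, Measurable (ℓ (oneHot K k))) {Y C z : Ω → Fin K → ℝ}
    (hY : Measurable Y) (hYoh : ∀ ω, ∃ k, Y ω = oneHot K k)
    (hC : ∀ k, (fun ω => C ω k) = μ[fun ω => Y ω k | m]) (hz : Measurable[m] z)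
    (hint : Integrable (fun ω => extLoss ℓ (Y ω) (z ω)) μ) :
    ∫ ω, extLoss ℓ (C ω) (z ω) ∂μ = ∫ ω, extLoss ℓ (Y ω) (z ω) ∂μ := by
  have hYΔ : ∀ ω, Y ω ∈ stdSimplex ℝ (Fin K) :=
    fun ω => mem_stdSimplex_of_exists_eq_oneHot (hYoh ω)
  have hweight : ∀ k, StronglyMeasurable[m] fun ω => ℓ (oneHot K k) (z ω) :=
    fun k => ((hℓ k).comp hz).stronglyMeasurable
  have hterm : ∀ k, Integrable (fun ω => Y ω k * ℓ (oneHot K k) (z ω)) μ := fun k =>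
    hint.mono
      (((measurable_pi_apply k).comp hY).mul ((hℓ k).comp (hz.mono hm le_rfl))).aestronglyMeasurable
      (Filter.Eventually.of_forall fun ω => by
        obtain ⟨j, hj⟩ := hYoh ω
        simpa only [hj] using norm_oneHot_mul_le_norm_extLoss ℓ j k (z ω))
  have htower : ∀ k, Integrable (fun ω => C ω k * ℓ (oneHot K k) (z ω)) μ ∧
      ∫ ω, C ω k * ℓ (oneHot K k) (z ω) ∂μ = ∫ ω, Y ω k * ℓ (oneHot K k) (z ω) ∂μ := fun k => by
    simpa only [← hC k] using integral_condExp_mul hm (hweight k) (hterm k)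
      (integrable_apply_of_mem_stdSimplex hY hYΔ k)
  simp only [extLoss]
  rw [integral_finsetSum _ fun k _ => hterm k, integral_finsetSum _ fun k _ => (htower k).1]
  exact Finset.sum_congr rfl fun k _ => (htower k).2

end ConditionalExpectation

/-- DeGroot–Fienberg decomposition: for `Z = f(X)` and the calibration map
`C = E[Y | Z]`, any proper loss satisfies `E[d(Y,Z)] = E[d(C,Z)] + E[d(Y,C)]`, and both
right-hand terms are nonnegative. -/
theorem stmt0
    {Ω 𝒳 : Type*} [MeasurableSpace Ω] [MeasurableSpace 𝒳]
    (μ : Measure Ω) [IsProbabilityMeasure μ]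
    (K : ℕ)
    (X : Ω → 𝒳) (hX : Measurable X)
    -- `Y` is a one-hot valued label
    (Y : Ω → Fin K → ℝ) (hY : Measurable Y)
    (hYoh : ∀ ω, ∃ k, Y ω = oneHot K k)
    -- `f` is a measurable map into the probability simplex
    (f : 𝒳 → Fin K → ℝ) (hf : Measurable f)
    (hfΔ : ∀ x, f x ∈ stdSimplex ℝ (Fin K))
    -- `ℓ` is a proper loss
    (ℓ : (Fin K → ℝ) → (Fin K → ℝ) → ℝ)
    (hℓmeas : ∀ k, Measurable (ℓ (oneHot K k)))
    (hproper : ∀ q ∈ stdSimplex ℝ (Fin K), ∀ z ∈ stdSimplex ℝ (Fin K),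
      extLoss ℓ q q ≤ extLoss ℓ q z)
    -- `Z = f(X)`, the σ-algebra generated by `Z`, and the calibration map `C = E[Y | Z]`
    (Z : Ω → Fin K → ℝ) (hZ : Z = fun ω => f (X ω))
    (mZ : MeasurableSpace Ω) (hmZ : mZ = MeasurableSpace.comap Z inferInstance)
    (C : Ω → Fin K → ℝ) (hC : ∀ k, (fun ω => C ω k) = μ[fun ω => Y ω k | mZ])
    -- all expectations exist
    (hint1 : Integrable (fun ω => extLoss ℓ (Y ω) (Z ω)) μ)
    (hint2 : Integrable (fun ω => extLoss ℓ (Y ω) (Y ω)) μ)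
    (hint3 : Integrable (fun ω => extLoss ℓ (C ω) (Z ω)) μ)
    (hint4 : Integrable (fun ω => extLoss ℓ (Y ω) (C ω)) μ)
    (hint5 : Integrable (fun ω => extLoss ℓ (C ω) (C ω)) μ) :
    (∫ ω, lossDiv ℓ (Y ω) (Z ω) ∂μ
        = ∫ ω, lossDiv ℓ (C ω) (Z ω) ∂μ + ∫ ω, lossDiv ℓ (Y ω) (C ω) ∂μ)
      ∧ 0 ≤ ∫ ω, lossDiv ℓ (C ω) (Z ω) ∂μ
      ∧ 0 ≤ ∫ ω, lossDiv ℓ (Y ω) (C ω) ∂μ := by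
  subst hmZ
  have hm : MeasurableSpace.comap Z inferInstance ≤ (inferInstance : MeasurableSpace Ω) :=
    (hZ ▸ hf.comp hX : Measurable Z).comap_le
  have hYΔ : ∀ ω, Y ω ∈ stdSimplex ℝ (Fin K) :=
    fun ω => mem_stdSimplex_of_exists_eq_oneHot (hYoh ω)
  have hCΔ := ae_mem_stdSimplex_condExp hm hY hYΔ hC
  have hYZ := integral_extLoss_condExp hm ℓ hℓmeas hY hYoh hC (comap_measurable Z) hint1
  have hYC := integral_extLoss_condExp hm ℓ hℓmeas hY hYoh hC
    (measurable_of_forall_eq_condExp hC) hint4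
  refine ⟨?_, integral_nonneg_of_ae ?_, integral_nonneg_of_ae ?_⟩
  · simp only [lossDiv]
    rw [integral_sub hint1 hint2, integral_sub hint3 hint5, integral_sub hint4 hint2]
    linarith
  · filter_upwards [hCΔ] with ω hω
    exact lossDiv_nonneg hproper hω (hZ ▸ hfΔ (X ω))
  · filter_upwards [hCΔ] with ω hω
    exact lossDiv_nonneg hproper (hYΔ ω) hω
end

section
/- For i = 1,…,N let X_i be i.i.d. draws of the input X, and given X_i let Y_i^{(1)},…,Y_i^{(n_i)} be conditionally i.i.d. labels in e^K drawn from the conditional law P(Y | X = X_i), with fixed integers n_i ≥ 1. Put y_{ik} = Σ_{j=1}^{n_i} Y_{ik}^{(j)}, μ̂_{ik} = y_{ik}/n_i and z_i = f(X_i) for a measurable f into Δ^{K−1}. Then for any fixed weights w_i ≥ 0 with W = Σ_i w_i > 0, the estimator ĤL = (1/W) Σ_{i=1}^N w_i Σ_{k=1}^K [ (μ̂_{ik} − z_{ik})² + μ̂_{ik}(1 − μ̂_{ik}) ] is an unbiased estimator of the expected squared loss L_PS = E[ ‖Y − f(X)‖² ], where (X,Y) follows the joint distribution of an input and a single label: E[ĤL]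 = L_PS. -/
/-!
For a one-hot label `y` we have `y k ^ 2 = y k`, so `‖y - z‖²` equals the expression
`∑ k, (z k ^ 2 + (1 - 2 * z k) * y k)`, which is affine in `y`; and the estimator's term
`(μ̂ₖ - zₖ)² + μ̂ₖ (1 - μ̂ₖ)` is, by plain algebra, the same affine expression evaluated at the
empirical mean `μ̂`. Given the input, the empirical mean is unbiased for the conditional mean of a
label, so each instance's term and the loss of a single pair `(X, Y)` have the same expectation
`E[∑ k, (f X k ^ 2 + (1 - 2 * f X k) * E[Y k | X])]`, and so does any weighted average.
-/

open MeasureTheory ProbabilityTheory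
open scoped ProbabilityTheory

open Set

section LinearizedSqLoss

variable {ι : Type*} [Fintype ι]

noncomputable def linearizedSqLoss (z y : ι → ℝ) : ℝ := ∑ k, (z k ^ 2 + (1 - 2 * z k) * y k)

lemma sum_sub_sq_add_mul_one_sub (a z : ι → ℝ) :
    ∑ k, ((a k - z k) ^ 2 + a k * (1 - a k)) = linearizedSqLoss z a :=
  Finset.sum_congr rfl fun _ _ => by ring

lemma norm_linearizedSqLoss_le {z y : ι → ℝ} (hz : z ∈ Icc 0 1) (hy : y ∈ Icc 0 1) :
    ‖linearizedSqLoss z y‖ ≤ Fintype.card ι := by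
  refine (norm_sum_le _ _).trans ?_
  rw [← nsmul_one, ← Finset.card_univ, ← Finset.sum_const]
  refine Finset.sum_le_sum fun k _ => ?_
  have hz0 : 0 ≤ z k := hz.1 k
  have hz1 : z k ≤ 1 := hz.2 k
  have hy0 : 0 ≤ y k := hy.1 k
  have hy1 : y k ≤ 1 := hy.2 k
  rw [Real.norm_eq_abs, abs_le]
  constructor <;> nlinarith

lemma continuous_linearizedSqLoss :
    Continuous fun p : (ι → ℝ) × (ι → ℝ) => linearizedSqLoss p.1 p.2 := by
  unfold linearizedSqLoss; fun_prop

lemma integral_linearizedSqLoss {Ω : Type*} [MeasurableSpace Ω] (μ : Measure Ω)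
    [IsProbabilityMeasure μ] (z : ι → ℝ) {g : Ω → ι → ℝ}
    (hg : ∀ k, Integrable (fun ω => g ω k) μ) :
    ∫ ω, linearizedSqLoss z (g ω) ∂μ = linearizedSqLoss z fun k => ∫ ω, g ω k ∂μ := by
  unfold linearizedSqLoss
  refine (integral_finsetSum _ fun k _ => (integrable_const _).add ((hg k).const_mul _)).trans
    (Finset.sum_congr rfl fun k _ => ?_)
  rw [integral_add' (integrable_const _) ((hg k).const_mul _), integral_const_mul]
  simp

end LinearizedSqLoss

lemma sum_oneHot_sub_sq (K : ℕ) (k' : Fin K) (z : Fin K → ℝ) :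
    ∑ k, (oneHot K k' k - z k) ^ 2 = linearizedSqLoss z (oneHot K k') :=
  Finset.sum_congr rfl fun k _ => by
    unfold oneHot
    rw [Pi.single_apply]
    split_ifs <;> ring

lemma oneHot_mem_Icc (K : ℕ) (k : Fin K) : oneHot K k ∈ Icc 0 1 :=
  stdSimplex_subset_Icc ℝ (single_mem_stdSimplex ℝ k)

lemma ae_mem_Icc_of_ae_oneHot {K : ℕ} {μ : Measure (Fin K → ℝ)}
    (h : ∀ᵐ y ∂μ, ∃ k, y = oneHot K k) : ∀ᵐ y ∂μ, y ∈ Icc 0 1 :=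
  h.mono fun _ ⟨k, hk⟩ => hk ▸ oneHot_mem_Icc K k

lemma integral_sum_comp_eval_div_card {ι E : Type*} [Fintype ι] [Nonempty ι]
    [MeasurableSpace E] (μ : Measure E) [IsProbabilityMeasure μ] {g : E → ℝ}
    (hg : Integrable g μ) :
    ∫ Y, (∑ j, g (Y j)) / Fintype.card ι ∂Measure.pi (fun _ : ι => μ) = ∫ y, g y ∂μ := by
  rw [integral_div, integral_finsetSum _ fun j _ => integrable_comp_eval hg,
    Finset.sum_congr rfl fun j _ =>
      integral_comp_eval (μ := fun _ : ι => μ) (i := j) hg.aestronglyMeasurable]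
  simp

lemma integral_sum_comp_eval {ι : Type*} [Fintype ι] {α : ι → Type*}
    [∀ i, MeasurableSpace (α i)] (μ : ∀ i, Measure (α i)) [∀ i, IsProbabilityMeasure (μ i)]
    {g : ∀ i, α i → ℝ} (hg : ∀ i, Integrable (g i) (μ i)) :
    ∫ ω, ∑ i, g i (ω i) ∂Measure.pi μ = ∑ i, ∫ x, g i x ∂μ i := by
  rw [integral_finsetSum _ fun i _ => integrable_comp_eval (hg i)]
  exact Finset.sum_congr rfl fun i _ => integral_comp_eval (hg i).aestronglyMeasurable

section EmpiricalMean

variable {K m : ℕ}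

noncomputable def empiricalMean (Y : Fin m → Fin K → ℝ) : Fin K → ℝ :=
  fun k => (∑ j, Y j k) / m

lemma measurable_empiricalMean :
    Measurable (empiricalMean : (Fin m → Fin K → ℝ) → Fin K → ℝ) := by
  unfold empiricalMean; fun_prop

lemma empiricalMean_mem_Icc {Y : Fin m → Fin K → ℝ} (hY : ∀ j, Y j ∈ Icc 0 1) :
    empiricalMean Y ∈ Icc 0 1 := by
  refine ⟨fun k => div_nonneg (Finset.sum_nonneg fun j _ => (hY j).1 k) m.cast_nonneg,
    fun k => div_le_one_of_le₀ ?_ m.cast_nonneg⟩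
  calc ∑ j, Y j k ≤ ∑ _j : Fin m, (1 : ℝ) := Finset.sum_le_sum fun j _ => (hY j).2 k
    _ = m := by simp

lemma ae_empiricalMean_mem_Icc {μ : Measure (Fin K → ℝ)} [IsProbabilityMeasure μ]
    (hμ : ∀ᵐ y ∂μ, y ∈ Icc 0 1) :
    ∀ᵐ Y ∂Measure.pi (fun _ : Fin m => μ), empiricalMean Y ∈ Icc 0 1 :=
  (Filter.eventually_all.2 fun _ => Measure.tendsto_eval_ae_ae.eventually hμ).mono
    fun _ => empiricalMean_mem_Icc

lemma integral_empiricalMean_apply (hm : m ≠ 0) (μ : Measure (Fin K → ℝ))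
    [IsProbabilityMeasure μ] {k : Fin K} (hk : Integrable (fun y => y k) μ) :
    ∫ Y, empiricalMean Y k ∂Measure.pi (fun _ : Fin m => μ) = ∫ y, y k ∂μ := by
  have : NeZero m := ⟨hm⟩
  simpa [empiricalMean] using integral_sum_comp_eval_div_card (ι := Fin m) μ hk

end EmpiricalMean

lemma integrable_apply_of_ae_mem_Icc {Ω ι : Type*} [MeasurableSpace Ω] {μ : Measure Ω}
    [IsFiniteMeasure μ] {g : Ω → ι → ℝ} (hg : Measurable g) (hgI : ∀ᵐ ω ∂μ, g ω ∈ Icc 0 1)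
    (k : ι) : Integrable (fun ω => g ω k) μ := by
  refine .of_bound ((measurable_pi_apply k).comp hg).aestronglyMeasurable 1 ?_
  filter_upwards [hgI] with ω hω
  have h0 : 0 ≤ g ω k := hω.1 k
  rw [Real.norm_eq_abs, abs_of_nonneg h0]
  exact hω.2 k

lemma integrable_compProd_linearizedSqLoss {ι 𝒳 E : Type*} [Fintype ι] [MeasurableSpace 𝒳]
    [MeasurableSpace E] (ν : Measure 𝒳) [IsProbabilityMeasure ν] (η : Kernel 𝒳 E)
    [IsMarkovKernel η] {f : 𝒳 → ι → ℝ} (hf : Measurable f) (hfI : ∀ x, f x ∈ Icc 0 1)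
    {g : E → ι → ℝ} (hg : Measurable g) (hgI : ∀ x, ∀ᵐ e ∂η x, g e ∈ Icc 0 1) :
    Integrable (fun q => linearizedSqLoss (f q.1) (g q.2)) (ν ⊗ₘ η) := by
  have hmeas : Measurable fun q : 𝒳 × E => linearizedSqLoss (f q.1) (g q.2) :=
    continuous_linearizedSqLoss.measurable.comp ((hf.comp measurable_fst).prodMk
      (hg.comp measurable_snd))
  refine .of_bound hmeas.aestronglyMeasurable (Fintype.card ι) ?_
  have hgI' : ∀ᵐ q ∂(ν ⊗ₘ η), g q.2 ∈ Icc 0 1 :=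
    Measure.ae_compProd_of_ae_ae (measurableSet_Icc.preimage (hg.comp measurable_snd))
      (.of_forall hgI)
  exact hgI'.mono fun q hq => norm_linearizedSqLoss_le (hfI q.1) hq

lemma integral_compProd_linearizedSqLoss {ι 𝒳 E : Type*} [Fintype ι] [MeasurableSpace 𝒳]
    [MeasurableSpace E] (ν : Measure 𝒳) [IsProbabilityMeasure ν] (η : Kernel 𝒳 E)
    [IsMarkovKernel η] {f : 𝒳 → ι → ℝ} (hf : Measurable f) (hfI : ∀ x, f x ∈ Icc 0 1)
    {g : E → ι → ℝ} (hg : Measurable g) (hgI : ∀ x, ∀ᵐ e ∂η x, g e ∈ Icc 0 1) :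
    ∫ q, linearizedSqLoss (f q.1) (g q.2) ∂(ν ⊗ₘ η)
      = ∫ x, linearizedSqLoss (f x) (fun k => ∫ e, g e k ∂η x) ∂ν := by
  rw [Measure.integral_compProd (integrable_compProd_linearizedSqLoss ν η hf hfI hg hgI)]
  exact integral_congr_ae (.of_forall fun x => integral_linearizedSqLoss (η x) (f x)
    (integrable_apply_of_ae_mem_Icc hg (hgI x)))

section Labels

variable {𝒳 : Type*} [MeasurableSpace 𝒳] {K : ℕ} (ν : Measure 𝒳) [IsProbabilityMeasure ν]
  (κ : Kernel 𝒳 (Fin K → ℝ)) [IsMarkovKernel κ] {f : 𝒳 → Fin K → ℝ}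

lemma integral_compProd_sum_sub_sq_of_oneHot (hκoh : ∀ x, ∀ᵐ y ∂κ x, ∃ k, y = oneHot K k)
    (hf : Measurable f) (hfI : ∀ x, f x ∈ Icc 0 1) :
    ∫ p, ∑ k, (p.2 k - f p.1 k) ^ 2 ∂(ν ⊗ₘ κ)
      = ∫ x, linearizedSqLoss (f x) (fun k => ∫ y, y k ∂κ x) ∂ν := by
  refine (integral_congr_ae ?_).trans (integral_compProd_linearizedSqLoss ν κ hf hfI
    measurable_id fun x => ae_mem_Icc_of_ae_oneHot (hκoh x))
  have h_oneHot : ∀ᵐ p ∂(ν ⊗ₘ κ), p.2 ∈ range (oneHot K) :=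
    Measure.ae_compProd_of_ae_ae ((finite_range _).measurableSet.preimage measurable_snd)
      (.of_forall fun x => (hκoh x).mono fun y ⟨k, hk⟩ => ⟨k, hk.symm⟩)
  filter_upwards [h_oneHot] with p ⟨k, hk⟩
  rw [← hk]
  exact sum_oneHot_sub_sq K k (f p.1)

lemma integral_compProd_linearizedSqLoss_empiricalMean {m : ℕ} (hm : m ≠ 0)
    (η : Kernel 𝒳 (Fin m → Fin K → ℝ)) [IsMarkovKernel η]
    (hη : ∀ x, η x = Measure.pi fun _ : Fin m => κ x) (hκI : ∀ x, ∀ᵐ y ∂κ x, y ∈ Icc 0 1)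
    (hf : Measurable f) (hfI : ∀ x, f x ∈ Icc 0 1) :
    ∫ q, linearizedSqLoss (f q.1) (empiricalMean q.2) ∂(ν ⊗ₘ η)
      = ∫ x, linearizedSqLoss (f x) (fun k => ∫ y, y k ∂κ x) ∂ν := by
  rw [integral_compProd_linearizedSqLoss ν η hf hfI measurable_empiricalMean
    fun x => (hη x).symm ▸ ae_empiricalMean_mem_Icc (hκI x)]
  refine integral_congr_ae (.of_forall fun x => ?_)
  simp only [hη]
  congr 1
  funext k
  exact integral_empiricalMean_apply hm (κ x)
    (integrable_apply_of_ae_mem_Icc measurable_id (hκI x) k)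

end Labels

theorem stmt4_general
    {𝒳 : Type*} [MeasurableSpace 𝒳]
    (K N : ℕ)
    -- law of the input `X` and conditional law `κ` of a single label given the input
    (ν : Measure 𝒳) [IsProbabilityMeasure ν]
    (κ : Kernel 𝒳 (Fin K → ℝ)) [IsMarkovKernel κ]
    (hκoh : ∀ x, ∀ᵐ y ∂(κ x), ∃ k, y = oneHot K k)
    -- numbers of annotators
    (n : Fin N → ℕ) (hn : ∀ i, 1 ≤ n i)
    -- conditionally i.i.d. labels: kernel of `m` labels is the `m`-fold product of `κ`
    (κpi : (m : ℕ) → Kernel 𝒳 (Fin m → Fin K → ℝ))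
    [∀ m, IsMarkovKernel (κpi m)]
    (hκpi : ∀ m x, κpi m x = Measure.pi fun _ : Fin m => κ x)
    -- the classifier `f`, measurable into the simplex
    (f : 𝒳 → Fin K → ℝ) (hf : Measurable f)
    (hfΔ : ∀ x, f x ∈ stdSimplex ℝ (Fin K))
    -- fixed nonnegative weights with positive total weight
    (w : Fin N → ℝ) (hW : 0 < ∑ i, w i) :
    -- instances are independent: the sample follows the product of the per-instance laws
    ∫ ω : (i : Fin N) → 𝒳 × (Fin (n i) → Fin K → ℝ),
        (∑ i, w i * ∑ k,
          (((∑ j, (ω i).2 j k) / (n i) - f (ω i).1 k) ^ 2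
            + ((∑ j, (ω i).2 j k) / (n i)) * (1 - (∑ j, (ω i).2 j k) / (n i))))
          / (∑ i, w i)
      ∂(Measure.pi fun i => ν ⊗ₘ κpi (n i))
    = ∫ p : 𝒳 × (Fin K → ℝ), ∑ k, (p.2 k - f p.1 k) ^ 2 ∂(ν ⊗ₘ κ) := by
  have hfI : ∀ x, f x ∈ Icc 0 1 := fun x => stdSimplex_subset_Icc ℝ (hfΔ x)
  have hκI : ∀ x, ∀ᵐ y ∂κ x, y ∈ Icc 0 1 := fun x => ae_mem_Icc_of_ae_oneHot (hκoh x)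
  have h_integrable (i : Fin N) :
      Integrable (fun q => linearizedSqLoss (f q.1) (empiricalMean q.2)) (ν ⊗ₘ κpi (n i)) :=
    integrable_compProd_linearizedSqLoss ν _ hf hfI measurable_empiricalMean
      fun x => (hκpi _ x).symm ▸ ae_empiricalMean_mem_Icc (hκI x)
  simp_rw [sum_sub_sq_add_mul_one_sub]
  change ∫ ω, (∑ i, w i * linearizedSqLoss (f (ω i).1) (empiricalMean (ω i).2)) / (∑ i, w i)
    ∂(Measure.pi fun i => ν ⊗ₘ κpi (n i)) = _
  rw [integral_div, integral_sum_comp_eval _ fun i => (h_integrable i).const_mul (w i),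
    integral_compProd_sum_sub_sq_of_oneHot ν κ hκoh hf hfI]
  simp_rw [integral_const_mul, integral_compProd_linearizedSqLoss_empiricalMean ν κ
    (Nat.one_le_iff_ne_zero.mp (hn _)) _ (hκpi _) hκI hf hfI, ← Finset.sum_mul]
  exact mul_div_cancel_left₀ _ hW.ne'

/-- unbiased estimator of the expected squared loss from label histograms:
inputs `X_i` are i.i.d. with law `ν`; given `X_i = x` the `n i` labels of instance `i` are
conditionally i.i.d. with law `κ x` (the conditional label law, one-hot valued); with
`μ̂_{ik} = y_{ik}/n_i` and `z_i = f(X_i)`, the weighted estimator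
`(1/W) ∑ᵢ wᵢ ∑ₖ [(μ̂_{ik} - z_{ik})² + μ̂_{ik}(1 - μ̂_{ik})]`
has expectation `L_PS = E[‖Y - f(X)‖²]` for a generic input-label pair `(X, Y) ∼ ν ⊗ₘ κ`. -/
theorem stmt4
    {𝒳 : Type*} [MeasurableSpace 𝒳]
    (K N : ℕ)
    -- law of the input `X` and conditional law `κ` of a single label given the input
    (ν : Measure 𝒳) [IsProbabilityMeasure ν]
    (κ : Kernel 𝒳 (Fin K → ℝ)) [IsMarkovKernel κ]
    (hκoh : ∀ x, ∀ᵐ y ∂(κ x), ∃ k, y = oneHot K k)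
    -- numbers of annotators
    (n : Fin N → ℕ) (hn : ∀ i, 1 ≤ n i)
    -- conditionally i.i.d. labels: kernel of `m` labels is the `m`-fold product of `κ`
    (κpi : (m : ℕ) → Kernel 𝒳 (Fin m → Fin K → ℝ))
    [∀ m, IsMarkovKernel (κpi m)]
    (hκpi : ∀ m x, κpi m x = Measure.pi fun _ : Fin m => κ x)
    -- the classifier `f`, measurable into the simplex
    (f : 𝒳 → Fin K → ℝ) (hf : Measurable f)
    (hfΔ : ∀ x, f x ∈ stdSimplex ℝ (Fin K))
    -- fixed nonnegative weights with positive total weight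
    (w : Fin N → ℝ) (hw : ∀ i, 0 ≤ w i) (hW : 0 < ∑ i, w i) :
    -- instances are independent: the sample follows the product of the per-instance laws
    ∫ ω : (i : Fin N) → 𝒳 × (Fin (n i) → Fin K → ℝ),
        (∑ i, w i * ∑ k,
          (((∑ j, (ω i).2 j k) / (n i) - f (ω i).1 k) ^ 2
            + ((∑ j, (ω i).2 j k) / (n i)) * (1 - (∑ j, (ω i).2 j k) / (n i))))
          / (∑ i, w i)
      ∂(Measure.pi fun i => ν ⊗ₘ κpi (n i))
    = ∫ p : 𝒳 × (Fin K → ℝ), ∑ k, (p.2 k - f p.1 k) ^ 2 ∂(ν ⊗ₘ κ) :=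
  stmt4_general K N ν κ hκoh n hn κpi hκpi f hf hfΔ w hW
end

section
/- For i = 1,…,N let X_i be i.i.d. draws of the input X, and given X_i let Y_i^{(1)},…,Y_i^{(n_i)} be conditionally i.i.d. labels with law Cat(Q(X_i)) for a measurable Q into Δ^{K−1}, with fixed integers n_i ≥ 2. Put μ̂_{ik} = (1/n_i) Σ_j Y_{ik}^{(j)} and z_i = f(X_i). Then Ĥ EL := (1/N) Σ_{i=1}^N Σ_{k=1}^K [ (μ̂_{ik} − z_{ik})² − (1/(n_i − 1)) μ̂_{ik}(1 − μ̂_{ik}) ] is an unbiased estimator of the epistemic loss EL = E[ ‖Q(X) − f(X)‖² ]: E[Ĥ EL] = EL. -/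
/-!
Fix an instance with input `x` and `m ≥ 2` labels, and write `q = Q x`, `z = f x` and
`S_k = ∑ⱼ Y_{jk}`. Each coordinate of a one-hot label satisfies `Y² = Y` and distinct labels are
independent, so `E S_k = m q_k` and `E S_k² = m q_k + m (m - 1) q_k²`. The estimator is the
quadratic `(S_k² - S_k) / (m (m - 1)) - 2 z_k S_k / m + z_k²` in `S_k`, hence its conditional
expectation is `q_k² - 2 z_k q_k + z_k² = (q_k - z_k)²`. Since the labels are almost surely
one-hot, the estimator is bounded, so it may be integrated over `x` and averaged over the
independent instances.
-/

open MeasureTheory ProbabilityTheory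
open scoped ProbabilityTheory

/-- The categorical distribution `Cat(q)` on one-hot vectors, with weights `q`. -/
noncomputable def catMeasure {K : ℕ} (q : Fin K → ℝ) : Measure (Fin K → ℝ) :=
  ∑ k, ENNReal.ofReal (q k) • Measure.dirac (oneHot K k)

open Set

namespace catMeasure

variable {K : ℕ}

instance isFiniteMeasure (q : Fin K → ℝ) : IsFiniteMeasure (catMeasure q) := by
  constructor
  simp [catMeasure, Measure.finsetSum_apply, ENNReal.sum_lt_top]

lemma isProbabilityMeasure {q : Fin K → ℝ} (hq : q ∈ stdSimplex ℝ (Fin K)) :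
    IsProbabilityMeasure (catMeasure q) := by
  constructor
  simp only [catMeasure, Measure.finsetSum_apply, Measure.smul_apply, measure_univ,
    smul_eq_mul, mul_one]
  rw [← ENNReal.ofReal_sum_of_nonneg fun k _ => hq.1 k, hq.2, ENNReal.ofReal_one]

lemma ae_mem_range_oneHot (q : Fin K → ℝ) : ∀ᵐ y ∂catMeasure q, y ∈ range (oneHot K) := by
  rw [ae_iff, catMeasure, Measure.finsetSum_apply]
  refine Finset.sum_eq_zero fun k _ => ?_
  simp [Measure.dirac_apply]

lemma integral_eq_sum {q : Fin K → ℝ} (hq : ∀ k, 0 ≤ q k) (g : (Fin K → ℝ) → ℝ) :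
    ∫ y, g y ∂catMeasure q = ∑ k, q k * g (oneHot K k) := by
  rw [catMeasure, integral_finsetSum_measure fun k _ =>
    (integrable_dirac enorm_lt_top).smul_measure ENNReal.ofReal_ne_top]
  simp [integral_smul_measure, ENNReal.toReal_ofReal (hq _)]

end catMeasure

section LabelSample

variable {K m : ℕ}

lemma finite_pi_range_oneHot : (univ.pi fun _ : Fin m => range (oneHot K)).Finite :=
  Set.Finite.pi fun _ => finite_range _

lemma ae_pi_catMeasure_mem_pi_range_oneHot (q : Fin K → ℝ) :
    ∀ᵐ y ∂Measure.pi (fun _ : Fin m => catMeasure q), y ∈ univ.pi fun _ => range (oneHot K) := by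
  filter_upwards [ae_all_iff.2 fun j =>
    Measure.tendsto_eval_ae_ae (i := j).eventually (catMeasure.ae_mem_range_oneHot q)]
    with y hy using fun j _ => hy j

lemma integrable_pi_catMeasure (q : Fin K → ℝ) (g : (Fin m → Fin K → ℝ) → ℝ) :
    Integrable g (Measure.pi fun _ : Fin m => catMeasure q) := by
  rw [← Measure.restrict_eq_self_of_ae_mem (ae_pi_catMeasure_mem_pi_range_oneHot q)]
  exact IntegrableOn.of_finite finite_pi_range_oneHot

lemma integral_pi_catMeasure_apply {q : Fin K → ℝ} (hq : q ∈ stdSimplex ℝ (Fin K))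
    (j : Fin m) (k : Fin K) :
    ∫ y, y j k ∂Measure.pi (fun _ : Fin m => catMeasure q) = q k := by
  have := catMeasure.isProbabilityMeasure hq
  rw [integral_comp_eval (X := fun _ : Fin m => Fin K → ℝ) (i := j) (f := fun v => v k)
      (measurable_pi_apply k).aestronglyMeasurable,
    catMeasure.integral_eq_sum hq.1]
  simp [oneHot, Pi.single_apply]

lemma integral_pi_catMeasure_apply_mul_apply {q : Fin K → ℝ} (hq : q ∈ stdSimplex ℝ (Fin K))
    (j j' : Fin m) (k : Fin K) :
    ∫ y, y j k * y j' k ∂Measure.pi (fun _ : Fin m => catMeasure q)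
      = if j = j' then q k else q k ^ 2 := by
  have := catMeasure.isProbabilityMeasure hq
  split_ifs with hjj'
  · subst hjj'
    rw [integral_comp_eval (X := fun _ : Fin m => Fin K → ℝ) (i := j) (f := fun v => v k * v k)
      (by fun_prop : Measurable fun v : Fin K → ℝ => v k * v k).aestronglyMeasurable,
      catMeasure.integral_eq_sum hq.1]
    simp [oneHot, Pi.single_apply]
  · have hindep := (iIndepFun_pi (μ := fun _ : Fin m => catMeasure q)
      (X := fun _ (v : Fin K → ℝ) => v k) fun _ => (measurable_pi_apply k).aemeasurable).indepFun
      hjj'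
    rw [hindep.integral_fun_mul_eq_mul_integral (integrable_pi_catMeasure q _).1
      (integrable_pi_catMeasure q _).1, integral_pi_catMeasure_apply hq,
      integral_pi_catMeasure_apply hq, sq]

lemma integral_pi_catMeasure_sum {q : Fin K → ℝ} (hq : q ∈ stdSimplex ℝ (Fin K)) (k : Fin K) :
    ∫ y, ∑ j, y j k ∂Measure.pi (fun _ : Fin m => catMeasure q) = m * q k := by
  rw [integral_finsetSum _ fun j _ => integrable_pi_catMeasure q _]
  simp [integral_pi_catMeasure_apply hq]

lemma integral_pi_catMeasure_sum_sq {q : Fin K → ℝ} (hq : q ∈ stdSimplex ℝ (Fin K)) (k : Fin K) :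
    ∫ y, (∑ j, y j k) ^ 2 ∂Measure.pi (fun _ : Fin m => catMeasure q)
      = m * q k + m * (m - 1) * q k ^ 2 := by
  simp_rw [sq, Finset.sum_mul_sum]
  rw [integral_finsetSum _ fun j _ => integrable_pi_catMeasure q _]
  simp_rw [integral_finsetSum _ fun j' _ => integrable_pi_catMeasure q _,
    integral_pi_catMeasure_apply_mul_apply hq]
  have hdiag : ∀ j j' : Fin m,
      (if j = j' then q k else q k ^ 2) = q k ^ 2 + if j = j' then q k - q k ^ 2 else 0 := by
    intro j j'
    split_ifs <;> ring
  simp [hdiag, Finset.sum_add_distrib]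
  ring

end LabelSample

noncomputable def debiasedSqError {K m : ℕ} (z : Fin K → ℝ) (y : Fin m → Fin K → ℝ) : ℝ :=
  ∑ k, (((∑ j, y j k) / m - z k) ^ 2
    - (1 / ((m : ℝ) - 1)) * (((∑ j, y j k) / m) * (1 - (∑ j, y j k) / m)))

lemma integral_debiasedSqError {K m : ℕ} (hm : 2 ≤ m) {q : Fin K → ℝ}
    (hq : q ∈ stdSimplex ℝ (Fin K)) (z : Fin K → ℝ) :
    ∫ y, debiasedSqError z y ∂Measure.pi (fun _ : Fin m => catMeasure q)
      = ∑ k, (q k - z k) ^ 2 := by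
  have hm : (2 : ℝ) ≤ m := by exact_mod_cast hm
  have hm0 : (m : ℝ) ≠ 0 := by linarith
  have hm1 : (m : ℝ) - 1 ≠ 0 := by linarith
  unfold debiasedSqError
  rw [integral_finsetSum _ fun k _ => integrable_pi_catMeasure q _]
  refine Finset.sum_congr rfl fun k _ => ?_
  have hquad : ∀ S : ℝ, (S / m - z k) ^ 2 - 1 / ((m : ℝ) - 1) * (S / m * (1 - S / m))
      = 1 / (m * (m - 1)) * S ^ 2 - (2 * z k / m + 1 / (m * (m - 1))) * S + z k ^ 2 := by
    intro S
    field_simp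
    ring
  simp_rw [hquad]
  rw [integral_add (integrable_pi_catMeasure q _) (integrable_pi_catMeasure q _),
    integral_sub (integrable_pi_catMeasure q _) (integrable_pi_catMeasure q _),
    integral_const_mul, integral_const_mul, integral_pi_catMeasure_sum_sq hq,
    integral_pi_catMeasure_sum hq]
  have := catMeasure.isProbabilityMeasure hq
  simp only [integral_const, probReal_univ, one_smul]
  field_simp
  ring

lemma abs_sq_sub_mul_le_one {a z c : ℝ} (ha : a ∈ Icc (0 : ℝ) 1) (hz : z ∈ Icc (0 : ℝ) 1)
    (hc : c ∈ Icc (0 : ℝ) 1) : |(a - z) ^ 2 - c * (a * (1 - a))| ≤ 1 := by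
  obtain ⟨ha0, ha1⟩ := ha
  obtain ⟨hz0, hz1⟩ := hz
  obtain ⟨hc0, hc1⟩ := hc
  have hvar : 0 ≤ a * (1 - a) := mul_nonneg ha0 (sub_nonneg.2 ha1)
  rw [abs_le]
  constructor <;> nlinarith [sq_nonneg (a - z), mul_nonneg hc0 hvar]

lemma sum_div_card_mem_Icc {m : ℕ} {a : Fin m → ℝ} (ha : ∀ j, a j ∈ Icc (0 : ℝ) 1) :
    (∑ j, a j) / m ∈ Icc (0 : ℝ) 1 := by
  have hsum : ∑ j, a j ≤ m := (Finset.sum_le_sum fun j _ => (ha j).2).trans_eq (by simp)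
  exact ⟨div_nonneg (Finset.sum_nonneg fun j _ => (ha j).1) m.cast_nonneg,
    div_le_one_of_le₀ hsum m.cast_nonneg⟩

lemma abs_debiasedSqError_le {K m : ℕ} (hm : 2 ≤ m) {z : Fin K → ℝ}
    (hz : z ∈ stdSimplex ℝ (Fin K)) {y : Fin m → Fin K → ℝ}
    (hy : y ∈ univ.pi fun _ => range (oneHot K)) : |debiasedSqError z y| ≤ K := by
  have hm : (2 : ℝ) ≤ m := by exact_mod_cast hm
  have hc : 1 / ((m : ℝ) - 1) ∈ Icc (0 : ℝ) 1 :=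
    ⟨one_div_nonneg.2 (by linarith), (div_le_one (by linarith)).2 (by linarith)⟩
  have hy01 : ∀ k j, y j k ∈ Icc (0 : ℝ) 1 := by
    intro k j
    obtain ⟨l, hl⟩ := hy j (mem_univ j)
    rw [← hl, oneHot, Pi.single_apply]
    split_ifs <;> simp
  calc |debiasedSqError z y|
      ≤ ∑ k, |((∑ j, y j k) / m - z k) ^ 2
          - 1 / ((m : ℝ) - 1) * ((∑ j, y j k) / m * (1 - (∑ j, y j k) / m))| :=
        Finset.abs_sum_le_sum_abs _ _
    _ ≤ ∑ _k : Fin K, (1 : ℝ) := Finset.sum_le_sum fun k _ =>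
        abs_sq_sub_mul_le_one (sum_div_card_mem_Icc (hy01 k)) (mem_Icc_of_mem_stdSimplex hz k) hc
    _ = K := by simp

section Instance

variable {𝒳 : Type*} [MeasurableSpace 𝒳] {K m : ℕ} {ν : Measure 𝒳} [IsFiniteMeasure ν]
  {Q f : 𝒳 → Fin K → ℝ} {κ : Kernel 𝒳 (Fin m → Fin K → ℝ)} [IsFiniteKernel κ]

lemma integrable_compProd_debiasedSqError (hm : 2 ≤ m)
    (hκ : ∀ x, κ x = Measure.pi fun _ => catMeasure (Q x)) (hf : Measurable f)
    (hfΔ : ∀ x, f x ∈ stdSimplex ℝ (Fin K)) :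
    Integrable (fun p : 𝒳 × (Fin m → Fin K → ℝ) => debiasedSqError (f p.1) p.2) (ν ⊗ₘ κ) := by
  have hmeas : Measurable fun p : 𝒳 × (Fin m → Fin K → ℝ) => debiasedSqError (f p.1) p.2 := by
    unfold debiasedSqError
    fun_prop
  have hlabels : ∀ᵐ p ∂(ν ⊗ₘ κ), p.2 ∈ univ.pi fun _ => range (oneHot K) :=
    Measure.ae_compProd_of_ae_ae (measurable_snd finite_pi_range_oneHot.measurableSet)
      (ae_of_all _ fun x => hκ x ▸ ae_pi_catMeasure_mem_pi_range_oneHot (Q x))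
  refine (integrable_const (K : ℝ)).mono' hmeas.aestronglyMeasurable ?_
  filter_upwards [hlabels] with p hp
  exact abs_debiasedSqError_le hm (hfΔ p.1) hp

lemma integral_compProd_debiasedSqError (hm : 2 ≤ m)
    (hQΔ : ∀ x, Q x ∈ stdSimplex ℝ (Fin K))
    (hκ : ∀ x, κ x = Measure.pi fun _ => catMeasure (Q x)) (hf : Measurable f)
    (hfΔ : ∀ x, f x ∈ stdSimplex ℝ (Fin K)) :
    ∫ p, debiasedSqError (f p.1) p.2 ∂(ν ⊗ₘ κ) = ∫ x, ∑ k, (Q x k - f x k) ^ 2 ∂ν := by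
  rw [Measure.integral_compProd (integrable_compProd_debiasedSqError hm hκ hf hfΔ)]
  congr 1 with x
  rw [hκ x]
  exact integral_debiasedSqError hm (hQΔ x) (f x)

end Instance

lemma integral_pi_sum_comp_eval {ι : Type*} [Fintype ι] {α : ι → Type*}
    [∀ i, MeasurableSpace (α i)] {μ : ∀ i, Measure (α i)} [∀ i, IsProbabilityMeasure (μ i)]
    {g : ∀ i, α i → ℝ} (hg : ∀ i, Integrable (g i) (μ i)) :
    ∫ ω, ∑ i, g i (ω i) ∂Measure.pi μ = ∑ i, ∫ x, g i x ∂μ i := by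
  rw [integral_finsetSum _ fun i _ => integrable_comp_eval (hg i)]
  exact Finset.sum_congr rfl fun i _ => integral_comp_eval (hg i).1

theorem stmt5_general
    {𝒳 : Type*} [MeasurableSpace 𝒳]
    (K N : ℕ) (hN : 0 < N)
    (ν : Measure 𝒳) [IsProbabilityMeasure ν]
    -- instance-wise class probability `Q`, measurable into the simplex
    (Q : 𝒳 → Fin K → ℝ)
    (hQΔ : ∀ x, Q x ∈ stdSimplex ℝ (Fin K))
    -- conditional law of a single label: `Cat(Q(x))`
    (κ : Kernel 𝒳 (Fin K → ℝ))
    (hκ : ∀ x, κ x = catMeasure (Q x))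
    -- numbers of annotators, at least two per instance
    (n : Fin N → ℕ) (hn : ∀ i, 2 ≤ n i)
    -- conditionally i.i.d. labels: kernel of `m` labels is the `m`-fold product of `κ`
    (κpi : (m : ℕ) → Kernel 𝒳 (Fin m → Fin K → ℝ))
    [∀ m, IsMarkovKernel (κpi m)]
    (hκpi : ∀ m x, κpi m x = Measure.pi fun _ : Fin m => κ x)
    -- the classifier `f`, measurable into the simplex
    (f : 𝒳 → Fin K → ℝ) (hf : Measurable f)
    (hfΔ : ∀ x, f x ∈ stdSimplex ℝ (Fin K)) :
    -- instances are independent: the sample follows the product of the per-instance laws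
    ∫ ω : (i : Fin N) → 𝒳 × (Fin (n i) → Fin K → ℝ),
        (1 / (N : ℝ)) * ∑ i, ∑ k,
          (((∑ j, (ω i).2 j k) / (n i) - f (ω i).1 k) ^ 2
            - (1 / ((n i : ℝ) - 1)) *
              (((∑ j, (ω i).2 j k) / (n i)) * (1 - (∑ j, (ω i).2 j k) / (n i))))
      ∂(Measure.pi fun i => ν ⊗ₘ κpi (n i))
    = ∫ x, ∑ k, (Q x k - f x k) ^ 2 ∂ν := by
  have hlabels : ∀ m x, κpi m x = Measure.pi fun _ : Fin m => catMeasure (Q x) := by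
    intro m x
    rw [hκpi, hκ]
  have hN : (N : ℝ) ≠ 0 := Nat.cast_ne_zero.2 hN.ne'
  change ∫ ω, 1 / (N : ℝ) * ∑ i, debiasedSqError (f (ω i).1) (ω i).2
    ∂(Measure.pi fun i => ν ⊗ₘ κpi (n i)) = _
  rw [integral_const_mul, integral_pi_sum_comp_eval fun i =>
    integrable_compProd_debiasedSqError (hn i) (hlabels (n i)) hf hfΔ]
  simp only [integral_compProd_debiasedSqError (hn _) hQΔ (hlabels _) hf hfΔ, Finset.sum_const,
    Finset.card_univ, Fintype.card_fin, nsmul_eq_mul]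
  field_simp

/-- unbiased estimator of the epistemic loss: inputs `X_i` are i.i.d. with
law `ν`; given `X_i = x` the `n i ≥ 2` labels of instance `i` are conditionally i.i.d. with
law `Cat(Q(x))`; with `μ̂_{ik} = (1/nᵢ) ∑ⱼ Y_{ik}^{(j)}` and `z_i = f(X_i)`, the estimator
`(1/N) ∑ᵢ ∑ₖ [(μ̂_{ik} - z_{ik})² - μ̂_{ik}(1 - μ̂_{ik})/(nᵢ - 1)]`
has expectation `EL = E[‖Q(X) - f(X)‖²]`. -/
theorem stmt5
    {𝒳 : Type*} [MeasurableSpace 𝒳]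
    (K N : ℕ) (hN : 0 < N)
    (ν : Measure 𝒳) [IsProbabilityMeasure ν]
    -- instance-wise class probability `Q`, measurable into the simplex
    (Q : 𝒳 → Fin K → ℝ) (hQ : Measurable Q)
    (hQΔ : ∀ x, Q x ∈ stdSimplex ℝ (Fin K))
    -- conditional law of a single label: `Cat(Q(x))`
    (κ : Kernel 𝒳 (Fin K → ℝ)) [IsMarkovKernel κ]
    (hκ : ∀ x, κ x = catMeasure (Q x))
    -- numbers of annotators, at least two per instance
    (n : Fin N → ℕ) (hn : ∀ i, 2 ≤ n i)
    -- conditionally i.i.d. labels: kernel of `m` labels is the `m`-fold product of `κ`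
    (κpi : (m : ℕ) → Kernel 𝒳 (Fin m → Fin K → ℝ))
    [∀ m, IsMarkovKernel (κpi m)]
    (hκpi : ∀ m x, κpi m x = Measure.pi fun _ : Fin m => κ x)
    -- the classifier `f`, measurable into the simplex
    (f : 𝒳 → Fin K → ℝ) (hf : Measurable f)
    (hfΔ : ∀ x, f x ∈ stdSimplex ℝ (Fin K)) :
    -- instances are independent: the sample follows the product of the per-instance laws
    ∫ ω : (i : Fin N) → 𝒳 × (Fin (n i) → Fin K → ℝ),
        (1 / (N : ℝ)) * ∑ i, ∑ k,
          (((∑ j, (ω i).2 j k) / (n i) - f (ω i).1 k) ^ 2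
            - (1 / ((n i : ℝ) - 1)) *
              (((∑ j, (ω i).2 j k) / (n i)) * (1 - (∑ j, (ω i).2 j k) / (n i))))
      ∂(Measure.pi fun i => ν ⊗ₘ κpi (n i))
    = ∫ x, ∑ k, (Q x k - f x k) ^ 2 ∂ν :=
  stmt5_general K N hN ν Q hQΔ κ hκ n hn κpi hκpi f hf hfΔ
end

section
/- Let (z_i, μ̂_i), i = 1,…,N, be i.i.d. random pairs with values in [0,1] × [0,1], let B ⊆ [0,1] be a measurable bin with P(z_1 ∈ B) > 0, and set I = { i ≤ N : z_i ∈ B }, c̄ = (1/|I|) Σ_{i∈I} μ̂_i, σ̄² = (1/|I|) Σ_{i∈I} μ̂_i² − c̄², and Û = (1/(|I|(|I|−1))) Σ_{i,i'∈I, i≠i'} μ̂_i μ̂_{i'} (these defined when |I| ≥ 2). Then: (a) on the event |I| ≥ 2, the deterministic identity (|I|/N) c̄² − (|I|/N) Û = (|I|/N) · σ̄²/(|I|−1) holds, so the debiased calibration-loss estimator (|I|/N)(c̄ − z̄)² − (|I|/N) σ̄²/(|I|−1) differs from the plugin estimator (|I|/N)(c̄ − z̄)² exactly by this correction term for any z̄;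 and (b) E[ (|I|/N) Û · 1{|I| ≥ 2} ] = ( P(z_1 ∈ B) − E[|I| · 1{|I| ≤ 1}]/N ) · C̄², where C̄ = E[ μ̂_1 | z_1 ∈ B ]. -/
open MeasureTheory

open scoped Classical in
/-- The random index set `I = {i ≤ N : z_i ∈ B}` of instances falling in bin `B`, where
`ω i = (z_i, μ̂_i)`. -/
noncomputable def binIdx {N : ℕ} (B : Set ℝ) (ω : Fin N → ℝ × ℝ) : Finset (Fin N) :=
  Finset.univ.filter fun i => (ω i).1 ∈ B

/-- The bin average `c̄ = (1/|I|) ∑_{i ∈ I} μ̂_i`. -/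
noncomputable def cbar {N : ℕ} (B : Set ℝ) (ω : Fin N → ℝ × ℝ) : ℝ :=
  (∑ i ∈ binIdx B ω, (ω i).2) / (binIdx B ω).card

/-- The bin variance `σ̄² = (1/|I|) ∑_{i ∈ I} μ̂_i² - c̄²`. -/
noncomputable def sigbar2 {N : ℕ} (B : Set ℝ) (ω : Fin N → ℝ × ℝ) : ℝ :=
  (∑ i ∈ binIdx B ω, (ω i).2 ^ 2) / (binIdx B ω).card - cbar B ω ^ 2

/-- The U-statistic `Û = (1/(|I|(|I|-1))) ∑_{i ≠ i' ∈ I} μ̂_i μ̂_{i'}`. -/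
noncomputable def ubar {N : ℕ} (B : Set ℝ) (ω : Fin N → ℝ × ℝ) : ℝ :=
  (∑ i ∈ binIdx B ω, ∑ i' ∈ (binIdx B ω).erase i, (ω i).2 * (ω i').2)
    / ((binIdx B ω).card * ((binIdx B ω).card - 1))

/-!
Part (a) is algebra: `∑_{i ≠ i'} μ̂_i μ̂_{i'} = (∑ μ̂_i)² - ∑ μ̂_i²`.

For (b), with `u = 1_B(z) μ̂` and `p = P(z ∈ B)`, the integrand is
`(1/N) ∑_{i ≠ i'} u(ω_i) u(ω_{i'}) / (1 + K_{ii'})`, where `K_{ii'}` counts the other indices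
falling in the bin. Expanding a function of such a count over the subsets `S` that could be the
set of those indices turns every term into a product of functions of single coordinates, so
Fubini shows that `K_{ii'}` is `Binomial(N - 2, p)` and independent of `(ω_i, ω_{i'})`. The
identity `E[1/(1 + Binomial(n, p))] = (1 - (1-p)^(n+1)) / ((n+1) p)` and
`E[|I| 1{|I| ≤ 1}] = P(|I| = 1) = N p (1-p)^(N-1)` then give the formula.
-/

open Finset
open scoped Classical

lemma Finset.prod_union_ite_mem {ι M : Type*} [CommMonoid M] [DecidableEq ι] {s t : Finset ι}
    (hts : Disjoint t s) (a b : ι → M) :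
    ∏ j ∈ t ∪ s, (if j ∈ t then a j else b j) = (∏ j ∈ t, a j) * ∏ j ∈ s, b j := by
  rw [prod_union hts, prod_ite_of_true fun j hj => hj,
    prod_ite_of_false fun j hj hjt => disjoint_left.1 hts hjt hj]

lemma add_one_mul_sum_choose_mul_pow_mul_inv (n : ℕ) (p : ℝ) :
    (n + 1) * p
        * ∑ k ∈ range (n + 1), n.choose k * p ^ k * (1 - p) ^ (n - k) * ((k : ℝ) + 1)⁻¹
      = 1 - (1 - p) ^ (n + 1) := by
  have hterm : ∀ k ∈ range (n + 1),
      (n + 1) * p * (n.choose k * p ^ k * (1 - p) ^ (n - k) * ((k : ℝ) + 1)⁻¹)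
        = p ^ (k + 1) * (1 - p) ^ (n + 1 - (k + 1)) * (n + 1).choose (k + 1) := by
    intro k _
    have hchoose : ((n : ℝ) + 1) * n.choose k = (n + 1).choose (k + 1) * ((k : ℝ) + 1) := by
      exact_mod_cast Nat.add_one_mul_choose_eq n k
    rw [Nat.add_sub_add_right]
    field_simp
    linear_combination p ^ k * p * (1 - p) ^ (n - k) * hchoose
  have hbinom := add_pow p (1 - p) (n + 1)
  rw [add_sub_cancel, one_pow, sum_range_succ'] at hbinom
  simp only [pow_zero, Nat.sub_zero, Nat.choose_zero_right, Nat.cast_one, one_mul, mul_one]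
    at hbinom
  rw [mul_sum, sum_congr rfl hterm]
  linarith

section Pattern

variable {ι α : Type*} (E : Set α)

noncomputable def patternFactor (S : Finset ι) (j : ι) : α → ℝ :=
  if j ∈ S then E.indicator 1 else Eᶜ.indicator 1

lemma prod_patternFactor {S s : Finset ι} (hS : S ⊆ s) (ω : ι → α) :
    ∏ j ∈ s, patternFactor E S j (ω j) = if {j ∈ s | ω j ∈ E} = S then 1 else 0 := by
  have hfactor : ∀ j, patternFactor E S j (ω j) = if (j ∈ S ↔ ω j ∈ E) then 1 else 0 := by
    intro j
    by_cases hj : j ∈ S <;> by_cases hω : ω j ∈ E <;> simp [patternFactor, hj, hω]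
  simp_rw [hfactor, prod_boole]
  congr 1
  refine propext ⟨fun h => ?_, fun h j hj => ?_⟩
  · ext j
    simp only [mem_filter]
    exact ⟨fun hj => (h j hj.1).2 hj.2, fun hj => ⟨hS hj, (h j (hS hj)).1 hj⟩⟩
  · simp [← h, hj]

lemma apply_card_filter_eq_sum_powerset (h : ℕ → ℝ) (s : Finset ι) (ω : ι → α) :
    h #{j ∈ s | ω j ∈ E}
      = ∑ S ∈ s.powerset, h #S * ∏ j ∈ s, patternFactor E S j (ω j) := by
  rw [sum_congr rfl fun S hS => by rw [prod_patternFactor E (mem_powerset.1 hS)]]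
  simp [mul_ite, sum_ite_eq, filter_subset]

lemma prod_mul_apply_card_filter_eq_sum {s t : Finset ι} (hts : Disjoint t s)
    (f : ι → α → ℝ) (h : ℕ → ℝ) (ω : ι → α) :
    (∏ j ∈ t, f j (ω j)) * h #{j ∈ s | ω j ∈ E}
      = ∑ S ∈ s.powerset,
          h #S * ∏ j ∈ t ∪ s, (if j ∈ t then f j else patternFactor E S j) (ω j) := by
  simp_rw [apply_card_filter_eq_sum_powerset E h s, mul_sum, ite_apply, prod_union_ite_mem hts]
  exact sum_congr rfl fun S _ => mul_left_comm _ _ _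

variable [MeasurableSpace α] (μ : Measure α) [IsProbabilityMeasure μ] {E}

lemma integral_patternFactor (hE : MeasurableSet E) (S : Finset ι) (j : ι) :
    ∫ x, patternFactor E S j x ∂μ = if j ∈ S then μ.real E else 1 - μ.real E := by
  unfold patternFactor
  split_ifs
  · exact integral_indicator_one hE
  · rw [integral_indicator_one hE.compl, probReal_compl_eq_one_sub hE]

lemma prod_integral_patternFactor (hE : MeasurableSet E) {S s : Finset ι} (hS : S ⊆ s) :
    ∏ j ∈ s, ∫ x, patternFactor E S j x ∂μ
      = μ.real E ^ #S * (1 - μ.real E) ^ (#s - #S) := by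
  simp_rw [integral_patternFactor μ hE, prod_ite, prod_const, filter_mem_eq_inter,
    inter_eq_right.2 hS, filter_not, filter_mem_eq_inter, inter_eq_right.2 hS,
    card_sdiff_of_subset hS]

lemma integrable_ite_patternFactor (hE : MeasurableSet E) {t : Finset ι} {f : ι → α → ℝ}
    (hf : ∀ j ∈ t, Integrable (f j) μ) (S : Finset ι) (j : ι) :
    Integrable (if j ∈ t then f j else patternFactor E S j) μ := by
  unfold patternFactor
  split_ifs with hjt
  · exact hf j hjt
  · exact (integrable_const 1).indicator hE
  · exact (integrable_const 1).indicator hE.compl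

end Pattern

section PiProduct

variable {ι α : Type*} [Fintype ι] [MeasurableSpace α] (μ : Measure α)
  [IsProbabilityMeasure μ]

lemma integral_prod_pi (f : ι → α → ℝ) (t : Finset ι) :
    ∫ ω, ∏ j ∈ t, f j (ω j) ∂Measure.pi (fun _ => μ)
      = ∏ j ∈ t, ∫ x, f j x ∂μ := by
  have hfactor : ∀ j, ∫ x, (if j ∈ t then f j x else 1) ∂μ
      = if j ∈ t then ∫ x, f j x ∂μ else 1 := by
    intro j
    split_ifs <;> simp
  simpa only [ite_apply, Pi.one_apply, Fintype.prod_ite_mem, hfactor] using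
    integral_fintype_prod_eq_prod (fun j => if j ∈ t then f j else 1) (μ := fun _ => μ)

lemma integrable_prod_pi {f : ι → α → ℝ} (t : Finset ι)
    (hf : ∀ j ∈ t, Integrable (f j) μ) :
    Integrable (fun ω => ∏ j ∈ t, f j (ω j)) (Measure.pi fun _ => μ) := by
  have hfactor : ∀ j, Integrable (if j ∈ t then f j else 1) μ := fun j => by
    split_ifs with hj
    exacts [hf j hj, integrable_const 1]
  simpa only [ite_apply, Pi.one_apply, Fintype.prod_ite_mem] using
    Integrable.fintype_prod (μ := fun _ => μ) hfactor

variable {E : Set α} {s t : Finset ι} {f : ι → α → ℝ}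

lemma integrable_prod_mul_apply_card_filter (hE : MeasurableSet E) (hts : Disjoint t s)
    (hf : ∀ j ∈ t, Integrable (f j) μ) (h : ℕ → ℝ) :
    Integrable (fun ω => (∏ j ∈ t, f j (ω j)) * h #{j ∈ s | ω j ∈ E})
      (Measure.pi fun _ => μ) := by
  simp_rw [prod_mul_apply_card_filter_eq_sum E hts f h]
  exact integrable_finsetSum _ fun S _ =>
    (integrable_prod_pi μ _ fun j _ => integrable_ite_patternFactor μ hE hf S j).const_mul _

theorem integral_prod_mul_apply_card_filter (hE : MeasurableSet E) (hts : Disjoint t s)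
    (hf : ∀ j ∈ t, Integrable (f j) μ) (h : ℕ → ℝ) :
    ∫ ω, (∏ j ∈ t, f j (ω j)) * h #{j ∈ s | ω j ∈ E} ∂Measure.pi (fun _ => μ)
      = (∏ j ∈ t, ∫ x, f j x ∂μ) * ∑ k ∈ range (#s + 1),
          (#s).choose k * μ.real E ^ k * (1 - μ.real E) ^ (#s - k) * h k := by
  simp_rw [prod_mul_apply_card_filter_eq_sum E hts f h]
  rw [integral_finsetSum _ fun S _ =>
    (integrable_prod_pi μ _ fun j _ => integrable_ite_patternFactor μ hE hf S j).const_mul _]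
  simp_rw [integral_const_mul, integral_prod_pi, apply_ite (integral μ),
    prod_union_ite_mem hts]
  rw [sum_congr rfl fun S hS => by rw [prod_integral_patternFactor μ hE (mem_powerset.1 hS)],
    sum_powerset_apply_card fun k => h k * ((∏ j ∈ t, ∫ x, f j x ∂μ)
      * (μ.real E ^ k * (1 - μ.real E) ^ (#s - k))), mul_sum]
  refine sum_congr rfl fun k _ => ?_
  rw [nsmul_eq_mul]
  ring

theorem integral_apply_card_filter (hE : MeasurableSet E) (h : ℕ → ℝ) :
    ∫ ω, h #{j ∈ s | ω j ∈ E} ∂Measure.pi (fun _ => μ)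
      = ∑ k ∈ range (#s + 1),
          (#s).choose k * μ.real E ^ k * (1 - μ.real E) ^ (#s - k) * h k := by
  simpa using integral_prod_mul_apply_card_filter μ hE (disjoint_empty_left s)
    (f := fun _ _ => 1) (by simp) h

end PiProduct

lemma sum_sum_erase_mul_eq_sq_sub_sum_sq {ι : Type*} [DecidableEq ι] (s : Finset ι)
    (f : ι → ℝ) :
    ∑ i ∈ s, ∑ i' ∈ s.erase i, f i * f i'
      = (∑ i ∈ s, f i) ^ 2 - ∑ i ∈ s, f i ^ 2 := by
  rw [sq, sum_mul_sum, ← sum_sub_distrib]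
  refine sum_congr rfl fun i hi => ?_
  rw [← add_sum_erase s (fun j => f i * f j) hi]
  ring

section Bin

variable {N : ℕ} (B : Set ℝ) (ω : Fin N → ℝ × ℝ)

lemma mem_binIdx {j : Fin N} : j ∈ binIdx B ω ↔ ω j ∈ Prod.fst ⁻¹' B := by
  simp [binIdx]

lemma cbar_sq_sub_ubar (h : 2 ≤ #(binIdx B ω)) :
    cbar B ω ^ 2 - ubar B ω = sigbar2 B ω / ((#(binIdx B ω) : ℝ) - 1) := by
  have hcard : (2 : ℝ) ≤ #(binIdx B ω) := by exact_mod_cast h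
  have hcard₀ : (#(binIdx B ω) : ℝ) ≠ 0 := by linarith
  have hcard₁ : (#(binIdx B ω) : ℝ) - 1 ≠ 0 := by linarith
  rw [ubar, sigbar2, cbar, sum_sum_erase_mul_eq_sq_sub_sum_sq]
  field_simp
  ring

lemma ite_two_le_card_mul_ubar (c : ℝ) :
    (if 2 ≤ #(binIdx B ω) then c * ubar B ω else 0) = c * ubar B ω := by
  split_ifs with h
  · rfl
  · have hden : (#(binIdx B ω) : ℝ) * (#(binIdx B ω) - 1) = 0 := by
      interval_cases #(binIdx B ω) <;> norm_num
    rw [ubar, hden, div_zero, mul_zero]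

lemma card_div_mul_ubar :
    (#(binIdx B ω) : ℝ) / N * ubar B ω = (N : ℝ)⁻¹ * ∑ i ∈ binIdx B ω,
      ∑ i' ∈ (binIdx B ω).erase i, (ω i).2 * (ω i').2 / ((#(binIdx B ω) : ℝ) - 1) := by
  rcases eq_or_ne (#(binIdx B ω) : ℝ) 0 with hI | hI
  · simp [card_eq_zero.1 (Nat.cast_eq_zero.1 hI)]
  · calc (#(binIdx B ω) : ℝ) / N * ubar B ω
        = (N : ℝ)⁻¹ * ((#(binIdx B ω) : ℝ)
            * ∑ i ∈ binIdx B ω, ∑ i' ∈ (binIdx B ω).erase i, (ω i).2 * (ω i').2)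
            / ((#(binIdx B ω) : ℝ) * ((#(binIdx B ω) : ℝ) - 1)) := by rw [ubar]; ring
      _ = _ := by rw [mul_div_assoc, mul_div_mul_left _ _ hI, sum_div]; simp_rw [sum_div]

noncomputable def pairTerm (i i' : Fin N) : ℝ :=
  (∏ j ∈ {i, i'}, (Prod.fst ⁻¹' B).indicator Prod.snd (ω j))
    * ((#{j ∈ ({i, i'} : Finset (Fin N))ᶜ | ω j ∈ Prod.fst ⁻¹' B} : ℝ) + 1)⁻¹

lemma pairTerm_eq_ite {i i' : Fin N} (hii' : i ≠ i') :
    pairTerm B ω i i' = if i ∈ binIdx B ω ∧ i' ∈ binIdx B ω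
      then (ω i).2 * (ω i').2 / ((#(binIdx B ω) : ℝ) - 1) else 0 := by
  rw [pairTerm, prod_pair hii']
  by_cases hI : i ∈ binIdx B ω ∧ i' ∈ binIdx B ω
  · obtain ⟨hi, hi'⟩ := hI
    have hi_erase : i ∈ (binIdx B ω).erase i' := mem_erase.2 ⟨hii', hi⟩
    have hcount : {j ∈ ({i, i'} : Finset (Fin N))ᶜ | ω j ∈ Prod.fst ⁻¹' B}
        = ((binIdx B ω).erase i').erase i := by
      rw [compl_insert, compl_singleton, filter_erase, filter_erase]
      rfl
    have hcard : (#(((binIdx B ω).erase i').erase i) : ℝ) + 1 = #(binIdx B ω) - 1 := by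
      rw [card_erase_of_mem hi_erase, Nat.cast_sub (card_pos.2 ⟨i, hi_erase⟩),
        card_erase_of_mem hi', Nat.cast_sub (card_pos.2 ⟨i', hi'⟩)]
      ring
    rw [if_pos ⟨hi, hi'⟩, Set.indicator_of_mem ((mem_binIdx B ω).1 hi),
      Set.indicator_of_mem ((mem_binIdx B ω).1 hi'), hcount, hcard, div_eq_mul_inv]
  · rw [if_neg hI]
    rcases not_and_or.1 hI with hi | hi'
    · rw [Set.indicator_of_notMem (mt (mem_binIdx B ω).2 hi), zero_mul, zero_mul]
    · rw [Set.indicator_of_notMem (mt (mem_binIdx B ω).2 hi'), mul_zero, zero_mul]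

lemma sum_erase_pairTerm (i : Fin N) :
    ∑ i' ∈ univ.erase i, pairTerm B ω i i'
      = if i ∈ binIdx B ω then
          ∑ i' ∈ (binIdx B ω).erase i, (ω i).2 * (ω i').2 / ((#(binIdx B ω) : ℝ) - 1)
        else 0 := by
  rw [sum_congr rfl fun i' hi' => pairTerm_eq_ite B ω (ne_of_mem_erase hi').symm]
  split_ifs with hi
  · simp only [hi, true_and, sum_ite_mem, erase_inter, univ_inter]
  · simp only [hi, false_and, if_false, sum_const_zero]

lemma ite_two_le_card_div_mul_ubar_eq_sum_pairTerm :
    (if 2 ≤ #(binIdx B ω) then (#(binIdx B ω) : ℝ) / N * ubar B ω else 0)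
      = (N : ℝ)⁻¹ * ∑ i, ∑ i' ∈ univ.erase i, pairTerm B ω i i' := by
  rw [ite_two_le_card_mul_ubar, card_div_mul_ubar,
    sum_congr rfl fun i _ => sum_erase_pairTerm B ω i, sum_ite_mem, univ_inter]

end Bin

section Expectations

variable {N : ℕ} (m : Measure (ℝ × ℝ)) [IsProbabilityMeasure m] {B : Set ℝ}

lemma integral_ite_card_le_one (hB : MeasurableSet B) :
    ∫ ω : Fin N → ℝ × ℝ, (if #(binIdx B ω) ≤ 1 then (#(binIdx B ω) : ℝ) else 0)
        ∂Measure.pi (fun _ => m)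
      = N * m.real (Prod.fst ⁻¹' B) * (1 - m.real (Prod.fst ⁻¹' B)) ^ (N - 1) := by
  have hbinom := integral_apply_card_filter (s := (univ : Finset (Fin N))) m (measurable_fst hB)
    fun k => if k ≤ 1 then (k : ℝ) else 0
  rw [card_univ, Fintype.card_fin,
    sum_eq_single 1 (fun k _ hk => by split_ifs <;> simp_all; omega) (by simp; omega)] at hbinom
  simp only [mul_one, pow_one, Nat.choose_one_right, Nat.cast_one, le_refl, if_true] at hbinom
  exact hbinom

lemma integrable_pairTerm (hB : MeasurableSet B)
    (hu : Integrable ((Prod.fst ⁻¹' B).indicator Prod.snd) m) (i i' : Fin N) :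
    Integrable (fun ω => pairTerm B ω i i') (Measure.pi fun _ => m) :=
  integrable_prod_mul_apply_card_filter m (measurable_fst hB) disjoint_compl_right
    (fun _ _ => hu) fun k => ((k : ℝ) + 1)⁻¹

lemma integral_pairTerm (hB : MeasurableSet B)
    (hu : Integrable ((Prod.fst ⁻¹' B).indicator Prod.snd) m) {i i' : Fin N} (hii' : i ≠ i') :
    ∫ ω, pairTerm B ω i i' ∂Measure.pi (fun _ => m)
      = (∫ x in Prod.fst ⁻¹' B, x.2 ∂m) ^ 2 * ∑ k ∈ range (N - 2 + 1), (N - 2).choose k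
          * m.real (Prod.fst ⁻¹' B) ^ k * (1 - m.real (Prod.fst ⁻¹' B)) ^ (N - 2 - k)
          * ((k : ℝ) + 1)⁻¹ := by
  unfold pairTerm
  rw [integral_prod_mul_apply_card_filter m (measurable_fst hB) disjoint_compl_right
      (fun _ _ => hu) fun k => ((k : ℝ) + 1)⁻¹, prod_pair hii',
    integral_indicator (measurable_fst hB), card_compl, card_pair hii', Fintype.card_fin, sq]

lemma integral_ite_two_le_card_div_mul_ubar (hB : MeasurableSet B)
    (hu : Integrable ((Prod.fst ⁻¹' B).indicator Prod.snd) m)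
    (hp : m.real (Prod.fst ⁻¹' B) ≠ 0) :
    ∫ ω : Fin N → ℝ × ℝ,
        (if 2 ≤ #(binIdx B ω) then (#(binIdx B ω) : ℝ) / N * ubar B ω else 0)
        ∂Measure.pi (fun _ => m)
      = (∫ x in Prod.fst ⁻¹' B, x.2 ∂m) ^ 2
          * (1 - (1 - m.real (Prod.fst ⁻¹' B)) ^ (N - 1)) / m.real (Prod.fst ⁻¹' B) := by
  simp_rw [ite_two_le_card_div_mul_ubar_eq_sum_pairTerm B]
  rw [integral_const_mul, integral_finsetSum _ fun i _ =>
    integrable_finsetSum _ fun i' _ => integrable_pairTerm m hB hu i i']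
  simp_rw [integral_finsetSum _ fun i' _ => integrable_pairTerm m hB hu _ i']
  rw [sum_congr rfl fun i _ => sum_congr rfl fun i' hi' =>
    integral_pairTerm m hB hu (ne_of_mem_erase hi').symm]
  simp only [sum_const, card_erase_of_mem (mem_univ _), card_univ, Fintype.card_fin, nsmul_eq_mul]
  rcases N with _ | _ | n
  · simp
  · simp
  · have hW := add_one_mul_sum_choose_mul_pow_mul_inv n (m.real (Prod.fst ⁻¹' B))
    rw [show n + 1 + 1 - 2 = n by omega, Nat.add_sub_cancel]
    push_cast
    field_simp
    simp only [div_eq_mul_inv]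
    linear_combination (∫ x in Prod.fst ⁻¹' B, x.2 ∂m) ^ 2 * hW

end Expectations

/-- for i.i.d. pairs `(z_i, μ̂_i) ∈ [0,1]²` and a bin `B` with
`P(z_1 ∈ B) > 0`: (a) on `|I| ≥ 2` the deterministic identity
`(|I|/N) c̄² - (|I|/N) Û = (|I|/N) σ̄²/(|I|-1)` holds, so the debiased calibration-loss
estimator differs from the plugin one exactly by this correction for any `z̄`;
(b) `E[(|I|/N) Û · 1{|I| ≥ 2}] = (P(z_1 ∈ B) - E[|I| · 1{|I| ≤ 1}]/N) C̄²`
with `C̄ = E[μ̂_1 | z_1 ∈ B]`. -/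
theorem stmt7
    (N : ℕ) (hN : 0 < N)
    (m : Measure (ℝ × ℝ)) [IsProbabilityMeasure m]
    (hm : ∀ᵐ p ∂m, p.1 ∈ Set.Icc (0 : ℝ) 1 ∧ p.2 ∈ Set.Icc (0 : ℝ) 1)
    (B : Set ℝ) (hB : MeasurableSet B)
    (hBpos : 0 < m {p | p.1 ∈ B}) :
    (∀ ω : Fin N → ℝ × ℝ, 2 ≤ (binIdx B ω).card →
      (((binIdx B ω).card : ℝ) / N * cbar B ω ^ 2
          - ((binIdx B ω).card : ℝ) / N * ubar B ω
        = ((binIdx B ω).card : ℝ) / N * (sigbar2 B ω / (((binIdx B ω).card : ℝ) - 1)))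
      ∧ ∀ zbar : ℝ,
          ((binIdx B ω).card : ℝ) / N * (cbar B ω - zbar) ^ 2
              - ((binIdx B ω).card : ℝ) / N * (sigbar2 B ω / (((binIdx B ω).card : ℝ) - 1))
            = ((binIdx B ω).card : ℝ) / N * (cbar B ω - zbar) ^ 2
              - (((binIdx B ω).card : ℝ) / N * cbar B ω ^ 2
                - ((binIdx B ω).card : ℝ) / N * ubar B ω))
    ∧ ∫ ω : Fin N → ℝ × ℝ,
          (if 2 ≤ (binIdx B ω).card then ((binIdx B ω).card : ℝ) / N * ubar B ω else 0)
        ∂(Measure.pi fun _ : Fin N => m)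
      = ((m {p | p.1 ∈ B}).toReal
          - (∫ ω : Fin N → ℝ × ℝ,
              (if (binIdx B ω).card ≤ 1 then ((binIdx B ω).card : ℝ) else 0)
              ∂(Measure.pi fun _ : Fin N => m)) / N)
        * ((∫ p in {p : ℝ × ℝ | p.1 ∈ B}, p.2 ∂m) / (m {p | p.1 ∈ B}).toReal) ^ 2 := by
  refine ⟨fun ω h => ?_, ?_⟩
  · simp only [← mul_sub, cbar_sq_sub_ubar B ω h, implies_true, and_self]
  have hu : Integrable ((Prod.fst ⁻¹' B).indicator Prod.snd) m := by
    refine (Integrable.of_bound measurable_snd.aestronglyMeasurable 1 ?_).indicator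
      (measurable_fst hB)
    filter_upwards [hm] with x hx
    rw [Real.norm_eq_abs, abs_le]
    constructor <;> linarith [hx.2.1, hx.2.2]
  have hp : m.real (Prod.fst ⁻¹' B) ≠ 0 :=
    (ENNReal.toReal_pos hBpos.ne' (measure_ne_top m _)).ne'
  change _ = (m.real (Prod.fst ⁻¹' B) - _ / N)
    * ((∫ x in Prod.fst ⁻¹' B, x.2 ∂m) / m.real (Prod.fst ⁻¹' B)) ^ 2
  rw [integral_ite_two_le_card_div_mul_ubar m hB hu hp, integral_ite_card_le_one m hB,
    mul_assoc, mul_div_cancel_left₀ _ (Nat.cast_ne_zero.2 hN.ne')]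
  field_simp
end

section
/- Let Y | X ∼ Cat(Q(X)) with Q measurable into Δ^{K−1}, Z = f(X), fix a class index k, and let B_{k1},…,B_{kB} be a measurable partition of [0,1] with P(Z_k ∈ B_{kb}) > 0 for each b. Define the bin-wise quantities C̄_{kb} = E[Y_k | Z_k ∈ B_{kb}], Z̄_{kb} = E[Z_k | Z_k ∈ B_{kb}], the epistemic loss component EL_k = E[(Q_k − Z_k)²], and the binned calibration loss CL_k(B) = Σ_b P(Z_k ∈ B_{kb}) (C̄_{kb} − Z̄_{kb})². Then the dispersion loss DL_k(B) := EL_k − CL_k(B) satisfies DL_k(B) = Σ_b P(Z_k ∈ B_{kb}) · E[ ((Q_k − C̄_{kb}) − (Z_k − Z̄_{kb}))² | Z_k ∈ B_{kb} ], and in particular every bin-wise summand is nonnegative, so DL_k(B) ≥ 0. -/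
/-!
On each bin `A_b = {Z_k ∈ B_b}` the conditional-expectation hypothesis turns the bin mean of
`Y_k` into the bin mean of `Q_k`, so `C̄_b - Z̄_b` is the mean of `Q_k - Z_k` on `A_b`. The
bias–variance identity `∫_A g² = ∫_A (g - c)² + P(A) c²` for the mean `c` of `g` on `A` then
splits `E[(Q_k - Z_k)²; A_b]` into the bin-wise dispersion plus the calibration term
`P(A_b) (C̄_b - Z̄_b)²`; summing over the bins, which partition `Ω` because `Z_k ∈ [0, 1]`,
gives the decomposition, and nonnegativity is that of integrals of squares.
-/

open MeasureTheory

section SetIntegral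

open Function

variable {Ω ι : Type*} [mΩ : MeasurableSpace Ω] {μ : Measure Ω} {s : Set Ω}

-- No positivity of `μ s` is needed: with `x / 0 = 0`, both sides vanish when `μ.real s = 0`.
lemma measureReal_mul_setIntegral_div (f : Ω → ℝ) (hs : μ s ≠ ⊤) :
    μ.real s * ((∫ x in s, f x ∂μ) / μ.real s) = ∫ x in s, f x ∂μ :=
  mul_div_cancel_of_imp' fun h =>
    setIntegral_measure_zero f ((measureReal_eq_zero_iff hs).mp h)

lemma setIntegral_sq_eq_setIntegral_sq_sub_add {g : Ω → ℝ} {c : ℝ} (hs : μ s ≠ ⊤)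
    (hg : IntegrableOn g s μ) (hg2 : IntegrableOn (fun x => g x ^ 2) s μ)
    (hmean : ∫ x in s, g x ∂μ = μ.real s * c) :
    ∫ x in s, g x ^ 2 ∂μ = ∫ x in s, (g x - c) ^ 2 ∂μ + μ.real s * c ^ 2 := by
  have hlin : IntegrableOn (fun x => g x ^ 2 - 2 * c * g x) s μ := hg2.sub (hg.const_mul _)
  have hexpand : ∫ x in s, (g x - c) ^ 2 ∂μ
      = ∫ x in s, g x ^ 2 ∂μ - 2 * c * ∫ x in s, g x ∂μ + μ.real s * c ^ 2 := by
    calc ∫ x in s, (g x - c) ^ 2 ∂μ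
        = ∫ x in s, (g x ^ 2 - 2 * c * g x + c ^ 2) ∂μ := by congr with x; ring
      _ = _ := by
        rw [integral_add hlin (integrableOn_const hs), integral_sub hg2 (hg.const_mul (2 * c)),
          integral_const_mul, setIntegral_const, smul_eq_mul]
  rw [hexpand, hmean]
  ring

lemma setIntegral_sq_sub_eq_setIntegral_sq_sub_sub_add {u v : Ω → ℝ} {a b : ℝ}
    (hs : μ s ≠ ⊤) (hu : IntegrableOn u s μ) (hv : IntegrableOn v s μ)
    (huv : IntegrableOn (fun x => (u x - v x) ^ 2) s μ)
    (ha : ∫ x in s, u x ∂μ = μ.real s * a) (hb : ∫ x in s, v x ∂μ = μ.real s * b) :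
    ∫ x in s, (u x - v x) ^ 2 ∂μ
      = ∫ x in s, ((u x - a) - (v x - b)) ^ 2 ∂μ + μ.real s * (a - b) ^ 2 := by
  have hmean : ∫ x in s, (u x - v x) ∂μ = μ.real s * (a - b) := by
    rw [integral_sub hu hv, ha, hb, mul_sub]
  rw [setIntegral_sq_eq_setIntegral_sq_sub_add (g := fun x => u x - v x) hs (hu.sub hv) huv
    hmean]
  congr 2 with x
  ring

lemma setIntegral_eq_setIntegral_of_condExp_ae_eq {m : MeasurableSpace Ω} {f g : Ω → ℝ}
    (hm : m ≤ mΩ) [SigmaFinite (μ.trim hm)] (hf : Integrable f μ) (hfg : μ[f|m] =ᵐ[μ] g)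
    (hs : MeasurableSet[m] s) :
    ∫ x in s, f x ∂μ = ∫ x in s, g x ∂μ := by
  rw [← setIntegral_condExp hm hf hs]
  exact integral_congr_ae (ae_restrict_of_ae hfg)

lemma integral_eq_sum_setIntegral_of_mem_iUnion [Fintype ι] {Z : Ω → ℝ} (hZ : Measurable Z)
    {B : ι → Set ℝ} (hB : ∀ i, MeasurableSet (B i)) (hdisj : Pairwise (Disjoint on B))
    (hcover : ∀ ω, Z ω ∈ ⋃ i, B i) {h : Ω → ℝ} (hh : Integrable h μ) :
    ∫ ω, h ω ∂μ = ∑ i, ∫ ω in {ω | Z ω ∈ B i}, h ω ∂μ := by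
  have hunion : (⋃ i, {ω | Z ω ∈ B i}) = Set.univ :=
    Set.eq_univ_of_forall fun ω => by simpa using hcover ω
  rw [← setIntegral_univ, ← hunion]
  exact integral_iUnion_fintype (fun i => hZ (hB i))
    (fun i j hij => (hdisj hij).preimage Z) fun _ => hh.integrableOn

lemma memLp_top_apply_of_mem_stdSimplex [Fintype ι] {F : Ω → ι → ℝ} (hF : Measurable F)
    (hFΔ : ∀ ω, F ω ∈ stdSimplex ℝ ι) (i : ι) : MemLp (fun ω => F ω i) ⊤ μ :=
  memLp_top_of_bound ((measurable_pi_apply i).comp hF).aestronglyMeasurable 1 <|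
    ae_of_all _ fun ω => by
      obtain ⟨h0, h1⟩ := mem_Icc_of_mem_stdSimplex (hFΔ ω) i
      rwa [Real.norm_of_nonneg h0]

end SetIntegral

theorem stmt8_general
    {Ω 𝒳 : Type*} [MeasurableSpace Ω] [MeasurableSpace 𝒳]
    (μ : Measure Ω) [IsProbabilityMeasure μ]
    (K : ℕ) (k₀ : Fin K)
    (X : Ω → 𝒳) (hX : Measurable X)
    -- `Y` is a one-hot valued label
    (Y : Ω → Fin K → ℝ) (hY : Measurable Y)
    (hYoh : ∀ ω, ∃ k, Y ω = oneHot K k)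
    -- instance-wise class probability `Q`, measurable into the simplex
    (Q : 𝒳 → Fin K → ℝ) (hQ : Measurable Q)
    (hQΔ : ∀ x, Q x ∈ stdSimplex ℝ (Fin K))
    -- conditional label distribution: `Y | X ∼ Cat(Q(X))`
    (hcond : ∀ k, μ[fun ω => Y ω k | MeasurableSpace.comap X inferInstance]
      =ᵐ[μ] fun ω => Q (X ω) k)
    -- `f` is a measurable map into the probability simplex, `Z = f(X)`
    (f : 𝒳 → Fin K → ℝ) (hf : Measurable f)
    (hfΔ : ∀ x, f x ∈ stdSimplex ℝ (Fin K))
    -- a measurable partition of `[0,1]` into `Bn` bins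
    (Bn : ℕ) (bins : Fin Bn → Set ℝ)
    (hbmeas : ∀ b, MeasurableSet (bins b))
    (hbdisj : ∀ b b', b ≠ b' → Disjoint (bins b) (bins b'))
    (hbcover : (⋃ b, bins b) = Set.Icc (0 : ℝ) 1)
    -- bin probabilities, bin-conditional means of `Y_k` and `Z_k`,
    -- epistemic loss and binned calibration loss
    (Pb : Fin Bn → ℝ) (hPb : ∀ b, Pb b = (μ {ω | f (X ω) k₀ ∈ bins b}).toReal)
    (Cbar : Fin Bn → ℝ)
    (hCbar : ∀ b, Cbar b = (∫ ω in {ω | f (X ω) k₀ ∈ bins b}, Y ω k₀ ∂μ) / Pb b)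
    (Zbar : Fin Bn → ℝ)
    (hZbar : ∀ b, Zbar b = (∫ ω in {ω | f (X ω) k₀ ∈ bins b}, f (X ω) k₀ ∂μ) / Pb b)
    (ELk : ℝ) (hELk : ELk = ∫ ω, (Q (X ω) k₀ - f (X ω) k₀) ^ 2 ∂μ)
    (CLk : ℝ) (hCLk : CLk = ∑ b, Pb b * (Cbar b - Zbar b) ^ 2) :
    (ELk - CLk
        = ∑ b, Pb b *
          ((∫ ω in {ω | f (X ω) k₀ ∈ bins b},
              ((Q (X ω) k₀ - Cbar b) - (f (X ω) k₀ - Zbar b)) ^ 2 ∂μ) / Pb b))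
      ∧ (∀ b, 0 ≤ Pb b *
          ((∫ ω in {ω | f (X ω) k₀ ∈ bins b},
              ((Q (X ω) k₀ - Cbar b) - (f (X ω) k₀ - Zbar b)) ^ 2 ∂μ) / Pb b))
      ∧ 0 ≤ ELk - CLk := by
  have hPb' : ∀ b, Pb b = μ.real {ω | f (X ω) k₀ ∈ bins b} := hPb
  have hfin : ∀ b, μ {ω | f (X ω) k₀ ∈ bins b} ≠ ⊤ := fun b => measure_ne_top μ _
  have hQLp : MemLp (fun ω => Q (X ω) k₀) ⊤ μ :=
    memLp_top_apply_of_mem_stdSimplex (hQ.comp hX) (fun ω => hQΔ (X ω)) k₀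
  have hZLp : MemLp (fun ω => f (X ω) k₀) ⊤ μ :=
    memLp_top_apply_of_mem_stdSimplex (hf.comp hX) (fun ω => hfΔ (X ω)) k₀
  have hYLp : MemLp (fun ω => Y ω k₀) ⊤ μ := memLp_top_apply_of_mem_stdSimplex hY
    (fun ω => by obtain ⟨k, hk⟩ := hYoh ω; exact hk ▸ single_mem_stdSimplex ℝ k) k₀
  have hsq : Integrable (fun ω => (Q (X ω) k₀ - f (X ω) k₀) ^ 2) μ :=
    ((hQLp.sub hZLp).mono_exponent (p := 2) le_top).integrable_sq
  have hbin : ∀ b, ∫ ω in {ω | f (X ω) k₀ ∈ bins b}, (Q (X ω) k₀ - f (X ω) k₀) ^ 2 ∂μ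
      = Pb b * ((∫ ω in {ω | f (X ω) k₀ ∈ bins b},
          ((Q (X ω) k₀ - Cbar b) - (f (X ω) k₀ - Zbar b)) ^ 2 ∂μ) / Pb b)
        + Pb b * (Cbar b - Zbar b) ^ 2 := fun b => by
    have hYQ := setIntegral_eq_setIntegral_of_condExp_ae_eq (s := {ω | f (X ω) k₀ ∈ bins b})
      hX.comap_le (hYLp.integrable le_top) (hcond k₀)
      ⟨_, (measurable_pi_apply k₀).comp hf (hbmeas b), rfl⟩
    rw [setIntegral_sq_sub_eq_setIntegral_sq_sub_sub_add (a := Cbar b) (b := Zbar b) (hfin b)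
      (hQLp.integrable le_top).integrableOn (hZLp.integrable le_top).integrableOn
      hsq.integrableOn
      (by rw [hCbar, hPb', hYQ, measureReal_mul_setIntegral_div _ (hfin b)])
      (by rw [hZbar, hPb', measureReal_mul_setIntegral_div _ (hfin b)]),
      hPb', measureReal_mul_setIntegral_div _ (hfin b)]
  have hDL : ELk - CLk = ∑ b, Pb b * ((∫ ω in {ω | f (X ω) k₀ ∈ bins b},
      ((Q (X ω) k₀ - Cbar b) - (f (X ω) k₀ - Zbar b)) ^ 2 ∂μ) / Pb b) := by
    have hcover : ∀ ω, f (X ω) k₀ ∈ ⋃ b, bins b :=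
      fun ω => hbcover ▸ mem_Icc_of_mem_stdSimplex (hfΔ (X ω)) k₀
    rw [hELk, hCLk, integral_eq_sum_setIntegral_of_mem_iUnion (by fun_prop) hbmeas
      (fun b b' => hbdisj b b') hcover hsq, ← Finset.sum_sub_distrib]
    exact Finset.sum_congr rfl fun b _ => by rw [hbin b, add_sub_cancel_right]
  have hterm : ∀ b, 0 ≤ Pb b * ((∫ ω in {ω | f (X ω) k₀ ∈ bins b},
      ((Q (X ω) k₀ - Cbar b) - (f (X ω) k₀ - Zbar b)) ^ 2 ∂μ) / Pb b) := fun b => by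
    rw [hPb', measureReal_mul_setIntegral_div _ (hfin b)]
    exact integral_nonneg fun _ => sq_nonneg _
  exact ⟨hDL, hterm, hDL ▸ Finset.sum_nonneg fun b _ => hterm b⟩

/-- dispersion-loss decomposition: with `Y | X ∼ Cat(Q(X))`, `Z = f(X)`,
a class `k₀`, and a measurable partition `B_1,…,B_B` of `[0,1]` with positive masses, the
dispersion loss `DL_k(𝓑) = EL_k - CL_k(𝓑)` equals
`∑_b P(Z_k ∈ B_b) E[((Q_k - C̄_b) - (Z_k - Z̄_b))² | Z_k ∈ B_b]`; each bin-wise summand is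
nonnegative, so `DL_k(𝓑) ≥ 0`. -/
theorem stmt8
    {Ω 𝒳 : Type*} [MeasurableSpace Ω] [MeasurableSpace 𝒳]
    (μ : Measure Ω) [IsProbabilityMeasure μ]
    (K : ℕ) (k₀ : Fin K)
    (X : Ω → 𝒳) (hX : Measurable X)
    -- `Y` is a one-hot valued label
    (Y : Ω → Fin K → ℝ) (hY : Measurable Y)
    (hYoh : ∀ ω, ∃ k, Y ω = oneHot K k)
    -- instance-wise class probability `Q`, measurable into the simplex
    (Q : 𝒳 → Fin K → ℝ) (hQ : Measurable Q)
    (hQΔ : ∀ x, Q x ∈ stdSimplex ℝ (Fin K))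
    -- conditional label distribution: `Y | X ∼ Cat(Q(X))`
    (hcond : ∀ k, μ[fun ω => Y ω k | MeasurableSpace.comap X inferInstance]
      =ᵐ[μ] fun ω => Q (X ω) k)
    -- `f` is a measurable map into the probability simplex, `Z = f(X)`
    (f : 𝒳 → Fin K → ℝ) (hf : Measurable f)
    (hfΔ : ∀ x, f x ∈ stdSimplex ℝ (Fin K))
    -- a measurable partition of `[0,1]` into `Bn` bins, each of positive probability
    (Bn : ℕ) (bins : Fin Bn → Set ℝ)
    (hbmeas : ∀ b, MeasurableSet (bins b))
    (hbdisj : ∀ b b', b ≠ b' → Disjoint (bins b) (bins b'))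
    (hbcover : (⋃ b, bins b) = Set.Icc (0 : ℝ) 1)
    (hbpos : ∀ b, 0 < μ {ω | f (X ω) k₀ ∈ bins b})
    -- bin probabilities, bin-conditional means of `Y_k` and `Z_k`,
    -- epistemic loss and binned calibration loss
    (Pb : Fin Bn → ℝ) (hPb : ∀ b, Pb b = (μ {ω | f (X ω) k₀ ∈ bins b}).toReal)
    (Cbar : Fin Bn → ℝ)
    (hCbar : ∀ b, Cbar b = (∫ ω in {ω | f (X ω) k₀ ∈ bins b}, Y ω k₀ ∂μ) / Pb b)
    (Zbar : Fin Bn → ℝ)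
    (hZbar : ∀ b, Zbar b = (∫ ω in {ω | f (X ω) k₀ ∈ bins b}, f (X ω) k₀ ∂μ) / Pb b)
    (ELk : ℝ) (hELk : ELk = ∫ ω, (Q (X ω) k₀ - f (X ω) k₀) ^ 2 ∂μ)
    (CLk : ℝ) (hCLk : CLk = ∑ b, Pb b * (Cbar b - Zbar b) ^ 2) :
    (ELk - CLk
        = ∑ b, Pb b *
          ((∫ ω in {ω | f (X ω) k₀ ∈ bins b},
              ((Q (X ω) k₀ - Cbar b) - (f (X ω) k₀ - Zbar b)) ^ 2 ∂μ) / Pb b))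
      ∧ (∀ b, 0 ≤ Pb b *
          ((∫ ω in {ω | f (X ω) k₀ ∈ bins b},
              ((Q (X ω) k₀ - Cbar b) - (f (X ω) k₀ - Zbar b)) ^ 2 ∂μ) / Pb b))
      ∧ 0 ≤ ELk - CLk :=
  stmt8_general μ K k₀ X hX Y hY hYoh Q hQ hQΔ hcond f hf hfΔ Bn bins hbmeas hbdisj hbcover Pb hPb
    Cbar hCbar Zbar hZbar ELk hELk CLk hCLk
end
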